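/- arXiv:1211.1069 — 4 statements merged into one kernel-verified Lean document; each statement's English description precedes it below -/
import Mathlib

section
/- For every 1-periodic locally integrable function w : ℝ² → ℝ with ∫_{[0,1)²} |w| < ∞, the interpolant Π_h w satisfies ‖Π_h w‖_{L¹([0,1)²)} ≤ ‖w‖_{L¹([0,1)²)}. -/
open MeasureTheory Set
open scoped ENNReal NNReal

noncomputable section

/-- One period: `Ω = [0,1)²`. -/
def Omg : Set (ℝ × ℝ) := Ico (0 : ℝ) 1 ×ˢ Ico (0 : ℝ) 1

/-- `f : ℝ² → ℝ` is 1-periodic in each variable. -/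
def Periodic2 (f : ℝ × ℝ → ℝ) : Prop :=
  (∀ z : ℝ × ℝ, f (z.1 + 1, z.2) = f z) ∧ ∀ z : ℝ × ℝ, f (z.1, z.2 + 1) = f z

/-- `f` coincides on `T` with a bilinear polynomial `a + b x¹ + c x² + d x¹x²`. -/
def IsBilinearOn (f : ℝ × ℝ → ℝ) (T : Set (ℝ × ℝ)) : Prop :=
  ∃ a b c d : ℝ, ∀ z ∈ T, f z = a + b * z.1 + c * z.2 + d * (z.1 * z.2)

/-- The cell `T_{k,l} = [k h₁,(k+1)h₁] × [l h₂,(l+1)h₂]`. -/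
def cell (h₁ h₂ : ℝ) (k l : ℤ) : Set (ℝ × ℝ) :=
  Icc ((k : ℝ) * h₁) (((k : ℝ) + 1) * h₁) ×ˢ Icc ((l : ℝ) * h₂) (((l : ℝ) + 1) * h₂)

/-- `Q = [-h₁/2, h₁/2] × [-h₂/2, h₂/2]`. -/
def Qset (h₁ h₂ : ℝ) : Set (ℝ × ℝ) :=
  Icc (-(h₁ / 2)) (h₁ / 2) ×ˢ Icc (-(h₂ / 2)) (h₂ / 2)

/-- The nodal value `W_{k,l} = (1/(h₁h₂)) ∫_Q w(z_{k,l} + ζ) dζ`. -/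
def nodalAvg (h₁ h₂ : ℝ) (w : ℝ × ℝ → ℝ) (k l : ℤ) : ℝ :=
  (h₁ * h₂)⁻¹ * ∫ ζ in Qset h₁ h₂, w ((k : ℝ) * h₁ + ζ.1, (l : ℝ) * h₂ + ζ.2)

/-- `Pw` is the interpolant `Π_h w`: continuous, 1-periodic in each variable,
bilinear on each cell, with nodal values `W_{k,l}`. -/
def IsInterpolant (h₁ h₂ : ℝ) (w Pw : ℝ × ℝ → ℝ) : Prop :=
  Continuous Pw ∧ Periodic2 Pw ∧ (∀ k l : ℤ, IsBilinearOn Pw (cell h₁ h₂ k l)) ∧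
    ∀ k l : ℤ, Pw ((k : ℝ) * h₁, (l : ℝ) * h₂) = nodalAvg h₁ h₂ w k l

/-!
On a cell, `|Π_h w|` lies below the bilinear interpolant of the absolute corner values, since
the absolute value of an affine function lies below its chord; integrating, the cell contributes
at most `h₁h₂/4` times the sum of its four absolute corner values. Summing over one period, where
the nodal values are periodic, gives `‖Π_h w‖₁ ≤ h₁h₂ ∑ |W_{k,l}|`. Each `h₁h₂ |W_{k,l}|` is at most
`∫_{z_{k,l}+Q} |w|`, and the boxes `z_{k,l} + Q` tile a translate of the period, over which the
integral of `|w|` equals `‖w‖₁` by periodicity.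
-/

def linInterp (a b p q x : ℝ) : ℝ := ((b - x) * p + (x - a) * q) / (b - a)

theorem linInterp_eq_mul_add_mul (a b p q x : ℝ) :
    linInterp a b p q x = linInterp a b 1 0 x * p + linInterp a b 0 1 x * q := by
  simp only [linInterp]; ring

theorem abs_linInterp_le {a b x : ℝ} (hx : x ∈ Icc a b) (p q : ℝ) :
    |linInterp a b p q x| ≤ linInterp a b |p| |q| x := by
  have hab := sub_nonneg.2 (hx.1.trans hx.2)
  rw [linInterp, linInterp, abs_div, abs_of_nonneg hab]
  refine div_le_div_of_nonneg_right ?_ hab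
  calc |(b - x) * p + (x - a) * q| ≤ |(b - x) * p| + |(x - a) * q| := abs_add_le _ _
    _ = (b - x) * |p| + (x - a) * |q| := by
      rw [abs_mul, abs_mul, abs_of_nonneg (sub_nonneg.2 hx.2), abs_of_nonneg (sub_nonneg.2 hx.1)]

theorem linInterp_mono {a b x : ℝ} (hx : x ∈ Icc a b) {p p' q q' : ℝ} (hp : p ≤ p')
    (hq : q ≤ q') : linInterp a b p q x ≤ linInterp a b p' q' x := by
  have := sub_nonneg.2 (hx.1.trans hx.2)
  have := sub_nonneg.2 hx.1
  have := sub_nonneg.2 hx.2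
  simp only [linInterp]
  gcongr

theorem integral_linInterp {a b : ℝ} (hab : a ≤ b) (p q : ℝ) :
    ∫ x in Ioc a b, linInterp a b p q x = (b - a) * (p + q) / 2 := by
  rcases hab.eq_or_lt with rfl | hab
  · simp
  rw [← intervalIntegral.integral_of_le hab.le]
  simp only [linInterp]
  rw [intervalIntegral.integral_div, intervalIntegral.integral_add,
    intervalIntegral.integral_mul_const, intervalIntegral.integral_mul_const,
    intervalIntegral.integral_sub, intervalIntegral.integral_sub]
  all_goals try exact Continuous.intervalIntegrable (by fun_prop) _ _
  simp only [integral_id, intervalIntegral.integral_const, smul_eq_mul]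
  field_simp
  ring

theorem MeasureTheory.LocallyIntegrable.integrableOn_Ioc_prod_Ioc {g : ℝ × ℝ → ℝ}
    (hg : LocallyIntegrable g) (a b c d : ℝ) : IntegrableOn g (Ioc a b ×ˢ Ioc c d) :=
  (hg.integrableOn_isCompact (isCompact_Icc.prod isCompact_Icc)).mono_set
    (prod_mono Ioc_subset_Icc_self Ioc_subset_Icc_self)

namespace IsBilinearOn

variable {f : ℝ × ℝ → ℝ} {x₀ x₁ y₀ y₁ : ℝ}

theorem integrableOn_Ioc_prod_Ioc (hf : IsBilinearOn f (Icc x₀ x₁ ×ˢ Icc y₀ y₁)) :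
    IntegrableOn f (Ioc x₀ x₁ ×ˢ Ioc y₀ y₁) := by
  obtain ⟨a, b, c, d, hf⟩ := hf
  refine IntegrableOn.congr_fun ?_ (fun z hz ↦ (hf z ?_).symm)
    (measurableSet_Ioc.prod measurableSet_Ioc)
  · exact (Continuous.locallyIntegrable (by fun_prop)).integrableOn_Ioc_prod_Ioc _ _ _ _
  · exact prod_mono Ioc_subset_Icc_self Ioc_subset_Icc_self hz

theorem eq_linInterp_fst (hf : IsBilinearOn f (Icc x₀ x₁ ×ˢ Icc y₀ y₁)) (hx : x₀ < x₁)
    {x y : ℝ} (hxy : (x, y) ∈ Icc x₀ x₁ ×ˢ Icc y₀ y₁) :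
    f (x, y) = linInterp x₀ x₁ (f (x₀, y)) (f (x₁, y)) x := by
  obtain ⟨a, b, c, d, hf⟩ := hf
  have := sub_ne_zero.2 hx.ne'
  rw [hf (x, y) hxy, hf (x₀, y) ⟨left_mem_Icc.2 hx.le, hxy.2⟩,
    hf (x₁, y) ⟨right_mem_Icc.2 hx.le, hxy.2⟩]
  simp only [linInterp]
  field_simp
  ring

theorem eq_linInterp_snd (hf : IsBilinearOn f (Icc x₀ x₁ ×ˢ Icc y₀ y₁)) (hy : y₀ < y₁)
    {x y : ℝ} (hxy : (x, y) ∈ Icc x₀ x₁ ×ˢ Icc y₀ y₁) :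
    f (x, y) = linInterp y₀ y₁ (f (x, y₀)) (f (x, y₁)) y := by
  obtain ⟨a, b, c, d, hf⟩ := hf
  have := sub_ne_zero.2 hy.ne'
  rw [hf (x, y) hxy, hf (x, y₀) ⟨hxy.1, left_mem_Icc.2 hy.le⟩,
    hf (x, y₁) ⟨hxy.1, right_mem_Icc.2 hy.le⟩]
  simp only [linInterp]
  field_simp
  ring

theorem abs_le_linInterp_linInterp (hf : IsBilinearOn f (Icc x₀ x₁ ×ˢ Icc y₀ y₁)) (hx : x₀ < x₁)
    (hy : y₀ < y₁) {z : ℝ × ℝ} (hz : z ∈ Icc x₀ x₁ ×ˢ Icc y₀ y₁) :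
    |f z| ≤ linInterp x₀ x₁ (linInterp y₀ y₁ |f (x₀, y₀)| |f (x₀, y₁)| z.2)
      (linInterp y₀ y₁ |f (x₁, y₀)| |f (x₁, y₁)| z.2) z.1 := by
  obtain ⟨x, y⟩ := z
  calc |f (x, y)| ≤ linInterp x₀ x₁ |f (x₀, y)| |f (x₁, y)| x := by
        rw [hf.eq_linInterp_fst hx hz]; exact abs_linInterp_le hz.1 _ _
    _ ≤ _ := by
        refine linInterp_mono hz.1 ?_ ?_
        · rw [hf.eq_linInterp_snd hy ⟨left_mem_Icc.2 hx.le, hz.2⟩]; exact abs_linInterp_le hz.2 _ _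
        · rw [hf.eq_linInterp_snd hy ⟨right_mem_Icc.2 hx.le, hz.2⟩]; exact abs_linInterp_le hz.2 _ _

end IsBilinearOn

theorem setIntegral_linInterp_linInterp {x₀ x₁ y₀ y₁ : ℝ} (hx : x₀ ≤ x₁) (hy : y₀ ≤ y₁)
    (p₀₀ p₀₁ p₁₀ p₁₁ : ℝ) :
    ∫ z in Ioc x₀ x₁ ×ˢ Ioc y₀ y₁,
        linInterp x₀ x₁ (linInterp y₀ y₁ p₀₀ p₀₁ z.2) (linInterp y₀ y₁ p₁₀ p₁₁ z.2) z.1 =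
      (x₁ - x₀) * (y₁ - y₀) / 4 * (p₀₀ + p₁₀ + p₀₁ + p₁₁) := by
  have hint : ∀ g : ℝ × ℝ → ℝ, Continuous g → IntegrableOn g (Ioc x₀ x₁ ×ˢ Ioc y₀ y₁) :=
    fun g hg ↦ hg.locallyIntegrable.integrableOn_Ioc_prod_Ioc _ _ _ _
  calc _ = ∫ z in Ioc x₀ x₁ ×ˢ Ioc y₀ y₁,
          (linInterp x₀ x₁ 1 0 z.1 * linInterp y₀ y₁ p₀₀ p₀₁ z.2
            + linInterp x₀ x₁ 0 1 z.1 * linInterp y₀ y₁ p₁₀ p₁₁ z.2) := by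
        simp only [← linInterp_eq_mul_add_mul]
    _ = (∫ x in Ioc x₀ x₁, linInterp x₀ x₁ 1 0 x) * (∫ y in Ioc y₀ y₁, linInterp y₀ y₁ p₀₀ p₀₁ y)
          + (∫ x in Ioc x₀ x₁, linInterp x₀ x₁ 0 1 x)
            * (∫ y in Ioc y₀ y₁, linInterp y₀ y₁ p₁₀ p₁₁ y) := by
        rw [integral_add (hint _ (by simp only [linInterp]; fun_prop))
          (hint _ (by simp only [linInterp]; fun_prop)), Measure.volume_eq_prod,
          setIntegral_prod_mul, setIntegral_prod_mul]
    _ = _ := by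
        simp only [integral_linInterp hx, integral_linInterp hy]
        ring

theorem IsBilinearOn.setIntegral_abs_le {f : ℝ × ℝ → ℝ} {x₀ x₁ y₀ y₁ : ℝ} (hx : x₀ < x₁)
    (hy : y₀ < y₁) (hf : IsBilinearOn f (Icc x₀ x₁ ×ˢ Icc y₀ y₁)) :
    ∫ z in Ioc x₀ x₁ ×ˢ Ioc y₀ y₁, |f z| ≤ (x₁ - x₀) * (y₁ - y₀) / 4 *
      (|f (x₀, y₀)| + |f (x₁, y₀)| + |f (x₀, y₁)| + |f (x₁, y₁)|) := by
  rw [← setIntegral_linInterp_linInterp hx.le hy.le]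
  refine setIntegral_mono_on hf.integrableOn_Ioc_prod_Ioc.abs
    ((Continuous.locallyIntegrable ?_).integrableOn_Ioc_prod_Ioc _ _ _ _)
    (measurableSet_Ioc.prod measurableSet_Ioc)
    fun z hz ↦ hf.abs_le_linInterp_linInterp hx hy
      (prod_mono Ioc_subset_Icc_self Ioc_subset_Icc_self hz)
  simp only [linInterp]
  fun_prop

theorem setIntegral_Ioc_prod_Ioc_eq_sum {a b : ℕ → ℝ} (ha : Monotone a) (hb : Monotone b)
    (m n : ℕ) {g : ℝ × ℝ → ℝ} (hg : IntegrableOn g (Ioc (a 0) (a m) ×ˢ Ioc (b 0) (b n))) :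
    ∫ z in Ioc (a 0) (a m) ×ˢ Ioc (b 0) (b n), g z =
      ∑ k ∈ Finset.range m, ∑ l ∈ Finset.range n,
        ∫ z in Ioc (a k) (a (k + 1)) ×ˢ Ioc (b l) (b (l + 1)), g z := by
  have hunion : ∀ {c : ℕ → ℝ}, Monotone c → ∀ N,
      ⋃ k ∈ Finset.range N, Ioc (c k) (c (k + 1)) = Ioc (c 0) (c N) := fun hc N ↦ by
    simpa [← Finset.coe_range] using hc.biUnion_Ico_Ioc_map_succ 0 N
  have hcells : Ioc (a 0) (a m) ×ˢ Ioc (b 0) (b n) =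
      ⋃ p ∈ Finset.range m ×ˢ Finset.range n,
        Ioc (a p.1) (a (p.1 + 1)) ×ˢ Ioc (b p.2) (b (p.2 + 1)) := by
    rw [← hunion ha, ← hunion hb]
    ext ⟨x, y⟩
    simp only [mem_prod, mem_iUnion, Finset.mem_product, exists_prop, Prod.exists]
    tauto
  rw [hcells] at hg ⊢
  rw [integral_biUnion_finset _ (fun _ _ ↦ measurableSet_Ioc.prod measurableSet_Ioc),
    Finset.sum_product]
  · rintro p - q - hpq
    simp only [Function.onFun, Set.disjoint_prod]
    by_cases h : p.1 = q.1
    · exact .inr (hb.pairwise_disjoint_on_Ioc_succ fun h' ↦ hpq (Prod.ext h h'))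
    · exact .inl (ha.pairwise_disjoint_on_Ioc_succ h)
  · exact fun p hp ↦ hg.mono_set (Finset.subset_set_biUnion_of_mem
    (f := fun p : ℕ × ℕ ↦ Ioc (a p.1) (a (p.1 + 1)) ×ˢ Ioc (b p.2) (b (p.2 + 1))) hp)

theorem Function.Periodic.setIntegral_Ioc_add_eq {f : ℝ → ℝ} {T : ℝ} (hf : Periodic f T)
    (hT : 0 ≤ T) (c : ℝ) : ∫ x in Ioc c (c + T), f x = ∫ x in Ioc 0 T, f x := by
  simpa [intervalIntegral.integral_of_le, hT] using hf.intervalIntegral_add_eq c 0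

theorem Periodic2.setIntegral_Ioc_prod_Ioc_add_one_eq {g : ℝ × ℝ → ℝ} (hg : Periodic2 g)
    (hgi : LocallyIntegrable g) (c₁ c₂ : ℝ) :
    ∫ z in Ioc c₁ (c₁ + 1) ×ˢ Ioc c₂ (c₂ + 1), g z = ∫ z in Ioc 0 1 ×ˢ Ioc 0 1, g z := by
  rw [Measure.volume_eq_prod, setIntegral_prod _ (hgi.integrableOn_Ioc_prod_Ioc _ _ _ _),
    setIntegral_prod _ (hgi.integrableOn_Ioc_prod_Ioc _ _ _ _)]
  have hinner : ∀ x, ∫ y in Ioc c₂ (c₂ + 1), g (x, y) = ∫ y in Ioc 0 1, g (x, y) := fun x ↦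
    Function.Periodic.setIntegral_Ioc_add_eq (fun y ↦ hg.2 (x, y)) zero_le_one c₂
  simp only [hinner]
  exact Function.Periodic.setIntegral_Ioc_add_eq (fun x ↦ by simp only [hg.1 (x, _)])
    zero_le_one c₁

theorem setIntegral_Icc_prod_Icc_comp_add (g : ℝ × ℝ → ℝ) (v : ℝ × ℝ) (a b c d : ℝ) :
    ∫ ζ in Icc a b ×ˢ Icc c d, g (v + ζ) =
      ∫ z in Ioc (v.1 + a) (v.1 + b) ×ˢ Ioc (v.2 + c) (v.2 + d), g z := by
  have hpre : (v + ·) ⁻¹' (Icc (v.1 + a) (v.1 + b) ×ˢ Icc (v.2 + c) (v.2 + d)) =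
      Icc a b ×ˢ Icc c d := by
    ext ζ
    simp only [mem_preimage, mem_prod, mem_Icc, Prod.fst_add, Prod.snd_add, add_le_add_iff_left]
  rw [← hpre, (measurePreserving_add_left volume v).setIntegral_preimage_emb
    (measurableEmbedding_addLeft v)]
  exact setIntegral_congr_set (Measure.set_prod_ae_eq Ioc_ae_eq_Icc Ioc_ae_eq_Icc).symm

theorem abs_nodalAvg_le {h₁ h₂ : ℝ} (hp₁ : 0 < h₁) (hp₂ : 0 < h₂) (w : ℝ × ℝ → ℝ) (k l : ℤ) :
    h₁ * h₂ * |nodalAvg h₁ h₂ w k l| ≤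
      ∫ z in Ioc (k * h₁ + -(h₁ / 2)) (k * h₁ + h₁ / 2) ×ˢ
        Ioc (l * h₂ + -(h₂ / 2)) (l * h₂ + h₂ / 2), |w z| := by
  calc h₁ * h₂ * |nodalAvg h₁ h₂ w k l|
        = |∫ ζ in Qset h₁ h₂, w (((k : ℝ) * h₁, (l : ℝ) * h₂) + ζ)| := by
          rw [nodalAvg, abs_mul, abs_inv, abs_of_pos (by positivity),
            mul_inv_cancel_left₀ (by positivity)]
          rfl
    _ ≤ ∫ ζ in Qset h₁ h₂, |w (((k : ℝ) * h₁, (l : ℝ) * h₂) + ζ)| := abs_integral_le_integral_abs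
    _ = _ := setIntegral_Icc_prod_Icc_comp_add (fun z ↦ |w z|) _ _ _ _ _

theorem Finset.sum_range_succ_eq_of_eq {M : Type*} [AddCancelCommMonoid M] (f : ℕ → M) {n : ℕ}
    (h : f n = f 0) : ∑ k ∈ range n, f (k + 1) = ∑ k ∈ range n, f k :=
  add_right_cancel (b := f 0) <| by rw [← sum_range_succ', sum_range_succ, h]

theorem sum_range_sum_range_corners {M : Type*} [AddCancelCommMonoid M] (F : ℕ → ℕ → M)
    {m n : ℕ} (hm : ∀ l, F m l = F 0 l) (hn : ∀ k, F k n = F k 0) :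
    ∑ k ∈ Finset.range m, ∑ l ∈ Finset.range n,
        (F k l + F (k + 1) l + F k (l + 1) + F (k + 1) (l + 1)) =
      4 • ∑ k ∈ Finset.range m, ∑ l ∈ Finset.range n, F k l := by
  have hrow : ∀ k, ∑ l ∈ Finset.range n, F k (l + 1) = ∑ l ∈ Finset.range n, F k l :=
    fun k ↦ Finset.sum_range_succ_eq_of_eq (F k) (hn k)
  have hcol : ∑ k ∈ Finset.range m, ∑ l ∈ Finset.range n, F (k + 1) l =
      ∑ k ∈ Finset.range m, ∑ l ∈ Finset.range n, F k l :=
    Finset.sum_range_succ_eq_of_eq (fun k ↦ ∑ l ∈ Finset.range n, F k l) (by simp only [hm])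
  simp only [Finset.sum_add_distrib, hrow, hcol]
  abel

theorem setIntegral_Omg_eq (g : ℝ × ℝ → ℝ) :
    ∫ z in Omg, g z = ∫ z in Ioc 0 1 ×ˢ Ioc 0 1, g z :=
  setIntegral_congr_set (Measure.set_prod_ae_eq Ico_ae_eq_Ioc Ico_ae_eq_Ioc)

theorem setIntegral_Omg_abs_le_sum_abs_nodes {N₁ N₂ : ℕ} {h₁ h₂ : ℝ} (hN₁ : N₁ * h₁ = 1)
    (hN₂ : N₂ * h₂ = 1) {f : ℝ × ℝ → ℝ} (hc : Continuous f) (hper : Periodic2 f)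
    (hbil : ∀ k l : ℤ, IsBilinearOn f (cell h₁ h₂ k l)) :
    ∫ z in Omg, |f z| ≤
      h₁ * h₂ * ∑ k ∈ Finset.range N₁, ∑ l ∈ Finset.range N₂, |f (k * h₁, l * h₂)| := by
  have hp₁ : 0 < h₁ := pos_of_mul_pos_right (hN₁ ▸ one_pos) N₁.cast_nonneg
  have hp₂ : 0 < h₂ := pos_of_mul_pos_right (hN₂ ▸ one_pos) N₂.cast_nonneg
  set x : ℕ → ℝ := fun k ↦ k * h₁
  set y : ℕ → ℝ := fun l ↦ l * h₂
  have hx : StrictMono x := fun i j hij ↦ by simp only [x]; gcongr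
  have hy : StrictMono y := fun i j hij ↦ by simp only [y]; gcongr
  set F : ℕ → ℕ → ℝ := fun k l ↦ |f (x k, y l)|
  have hcell : ∀ k l, ∫ z in Ioc (x k) (x (k + 1)) ×ˢ Ioc (y l) (y (l + 1)), |f z| ≤
      h₁ * h₂ / 4 * (F k l + F (k + 1) l + F k (l + 1) + F (k + 1) (l + 1)) := fun k l ↦ by
    have hbil' : IsBilinearOn f (Icc (x k) (x (k + 1)) ×ˢ Icc (y l) (y (l + 1))) := by
      simpa [cell, x, y] using hbil k l
    convert hbil'.setIntegral_abs_le (hx k.lt_succ_self) (hy l.lt_succ_self) using 2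
    simp only [x, y]; push_cast; ring
  calc ∫ z in Omg, |f z| = ∫ z in Ioc (x 0) (x N₁) ×ˢ Ioc (y 0) (y N₂), |f z| := by
        simp [setIntegral_Omg_eq, x, y, hN₁, hN₂]
    _ = ∑ k ∈ Finset.range N₁, ∑ l ∈ Finset.range N₂,
          ∫ z in Ioc (x k) (x (k + 1)) ×ˢ Ioc (y l) (y (l + 1)), |f z| :=
        setIntegral_Ioc_prod_Ioc_eq_sum hx.monotone hy.monotone _ _
          (hc.abs.locallyIntegrable.integrableOn_Ioc_prod_Ioc _ _ _ _)
    _ ≤ ∑ k ∈ Finset.range N₁, ∑ l ∈ Finset.range N₂,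
          h₁ * h₂ / 4 * (F k l + F (k + 1) l + F k (l + 1) + F (k + 1) (l + 1)) := by
        gcongr with k _ l _; exact hcell k l
    _ = h₁ * h₂ * ∑ k ∈ Finset.range N₁, ∑ l ∈ Finset.range N₂, F k l := by
        simp only [← Finset.mul_sum]
        rw [sum_range_sum_range_corners F (fun l ↦ ?_) (fun k ↦ ?_), nsmul_eq_mul]
        · push_cast; ring
        · simpa [F, x, hN₁] using congrArg abs (hper.1 (0, y l))
        · simpa [F, y, hN₂] using congrArg abs (hper.2 (x k, 0))

theorem sum_abs_nodalAvg_le {N₁ N₂ : ℕ} {h₁ h₂ : ℝ} (hN₁ : N₁ * h₁ = 1) (hN₂ : N₂ * h₂ = 1)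
    {w : ℝ × ℝ → ℝ} (hw : LocallyIntegrable w) (hper : Periodic2 w) :
    h₁ * h₂ * ∑ k ∈ Finset.range N₁, ∑ l ∈ Finset.range N₂, |nodalAvg h₁ h₂ w k l| ≤
      ∫ z in Omg, |w z| := by
  have hp₁ : 0 < h₁ := pos_of_mul_pos_right (hN₁ ▸ one_pos) N₁.cast_nonneg
  have hp₂ : 0 < h₂ := pos_of_mul_pos_right (hN₂ ▸ one_pos) N₂.cast_nonneg
  set x : ℕ → ℝ := fun k ↦ k * h₁ + -(h₁ / 2)
  set y : ℕ → ℝ := fun l ↦ l * h₂ + -(h₂ / 2)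
  have hx : Monotone x := fun i j hij ↦ by simp only [x]; gcongr
  have hy : Monotone y := fun i j hij ↦ by simp only [y]; gcongr
  have hwabs : LocallyIntegrable fun z ↦ |w z| := fun z ↦ (hw z).norm
  calc h₁ * h₂ * ∑ k ∈ Finset.range N₁, ∑ l ∈ Finset.range N₂, |nodalAvg h₁ h₂ w k l|
      ≤ ∑ k ∈ Finset.range N₁, ∑ l ∈ Finset.range N₂,
          ∫ z in Ioc (x k) (x (k + 1)) ×ˢ Ioc (y l) (y (l + 1)), |w z| := by
        simp only [Finset.mul_sum]
        gcongr with k _ l _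
        refine (abs_nodalAvg_le hp₁ hp₂ w k l).trans_eq ?_
        simp only [x, y, Int.cast_natCast, Nat.cast_succ]
        ring_nf
    _ = ∫ z in Ioc (x 0) (x N₁) ×ˢ Ioc (y 0) (y N₂), |w z| :=
        (setIntegral_Ioc_prod_Ioc_eq_sum hx hy _ _ (hwabs.integrableOn_Ioc_prod_Ioc _ _ _ _)).symm
    _ = ∫ z in Ioc (-(h₁ / 2)) (-(h₁ / 2) + 1) ×ˢ Ioc (-(h₂ / 2)) (-(h₂ / 2) + 1), |w z| := by
        simp only [x, y, hN₁, hN₂]; push_cast; ring_nf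
    _ = ∫ z in Omg, |w z| := by
        rw [setIntegral_Omg_eq]
        exact Periodic2.setIntegral_Ioc_prod_Ioc_add_one_eq
          ⟨fun z ↦ congrArg abs (hper.1 z), fun z ↦ congrArg abs (hper.2 z)⟩ hwabs _ _

theorem stmt0_general (N₁ N₂ : ℕ) (hN₁ : 0 < N₁) (hN₂ : 0 < N₂) (h₁ h₂ : ℝ)
    (hh₁ : h₁ = 1 / N₁) (hh₂ : h₂ = 1 / N₂)
    (w : ℝ × ℝ → ℝ) (hwloc : LocallyIntegrable w volume) (hwper : Periodic2 w)
    (Pw : ℝ × ℝ → ℝ) (hPw : IsInterpolant h₁ h₂ w Pw) :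
    (∫ z in Omg, |Pw z|) ≤ ∫ z in Omg, |w z| := by
  obtain ⟨hcont, hper, hbil, hnodes⟩ := hPw
  have hN₁h : (N₁ : ℝ) * h₁ = 1 := by rw [hh₁]; field_simp
  have hN₂h : (N₂ : ℝ) * h₂ = 1 := by rw [hh₂]; field_simp
  calc ∫ z in Omg, |Pw z|
      ≤ h₁ * h₂ * ∑ k ∈ Finset.range N₁, ∑ l ∈ Finset.range N₂, |Pw (k * h₁, l * h₂)| :=
        setIntegral_Omg_abs_le_sum_abs_nodes hN₁h hN₂h hcont hper hbil
    _ = h₁ * h₂ * ∑ k ∈ Finset.range N₁, ∑ l ∈ Finset.range N₂, |nodalAvg h₁ h₂ w k l| := by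
        simp_rw [← hnodes, Int.cast_natCast]
    _ ≤ ∫ z in Omg, |w z| := sum_abs_nodalAvg_le hN₁h hN₂h hwloc hwper

/-- L¹-stability of `Π_h`, periodic case. -/
theorem stmt0 (N₁ N₂ : ℕ) (hN₁ : 0 < N₁) (hN₂ : 0 < N₂) (h₁ h₂ : ℝ)
    (hh₁ : h₁ = 1 / N₁) (hh₂ : h₂ = 1 / N₂)
    (w : ℝ × ℝ → ℝ) (hwloc : LocallyIntegrable w volume) (hwper : Periodic2 w)
    (hwint : IntegrableOn w Omg volume)
    (Pw : ℝ × ℝ → ℝ) (hPw : IsInterpolant h₁ h₂ w Pw) :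
    (∫ z in Omg, |Pw z|) ≤ ∫ z in Omg, |w z| :=
  stmt0_general N₁ N₂ hN₁ hN₂ h₁ h₂ hh₁ hh₂ w hwloc hwper Pw hPw
end
end

section
/- For every 1-periodic essentially bounded function w : ℝ² → ℝ, the interpolant Π_h w satisfies ‖Π_h w‖_{L^∞([0,1)²)} ≤ ‖w‖_{L^∞([0,1)²)}. -/
open MeasureTheory Set
open scoped ENNReal NNReal

noncomputable section

/- The nodal values are averages of `w` over translates of `Q`, so they are bounded by
`‖w‖_∞` once the bound `|w| ≤ ‖w‖_∞`, known a.e. on one period, is spread to all of `ℝ²` by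
periodicity. On each cell `Π_h w` is bilinear, hence affine in each variable separately, so
its absolute value is bounded by its values at the four corners, which are nodes. -/

lemma Periodic2.apply_add_int {w : ℝ × ℝ → ℝ} (hw : Periodic2 w) (m n : ℤ) (z : ℝ × ℝ) :
    w (z.1 + m, z.2 + n) = w z := by
  have hx : Function.Periodic (fun x => w (x, z.2 + n)) 1 := fun x => hw.1 (x, z.2 + n)
  have hy : Function.Periodic (fun y => w (z.1, y)) 1 := fun y => hw.2 (z.1, y)
  have h₁ : w (z.1 + m, z.2 + n) = w (z.1, z.2 + n) := by simpa using hx.int_mul m z.1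
  have h₂ : w (z.1, z.2 + n) = w z := by simpa using hy.int_mul n z.2
  rw [h₁, h₂]

lemma measurableSet_Omg : MeasurableSet Omg :=
  measurableSet_Ico.prod measurableSet_Ico

lemma Periodic2.ae_of_ae_restrict_Omg {w : ℝ × ℝ → ℝ} (hw : Periodic2 w) {p : ℝ → Prop}
    (h : ∀ᵐ x ∂volume.restrict Omg, p (w x)) : ∀ᵐ x, p (w x) := by
  rw [ae_restrict_iff' measurableSet_Omg] at h
  have hshift (v : ℤ × ℤ) : ∀ᵐ x : ℝ × ℝ, x - ((v.1 : ℝ), (v.2 : ℝ)) ∈ Omg → p (w x) := by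
    set c : ℝ × ℝ := ((v.1 : ℝ), (v.2 : ℝ))
    filter_upwards [(measurePreserving_sub_right volume c).quasiMeasurePreserving.ae h]
      with x hx hmem
    have hper : w x = w (x - c) := by simpa [c] using hw.apply_add_int v.1 v.2 (x - c)
    exact hper ▸ hx hmem
  filter_upwards [ae_all_iff.2 hshift] with x hx
  refine hx (⌊x.1⌋, ⌊x.2⌋) ⟨⟨?_, ?_⟩, ?_, ?_⟩ <;> simp only [Prod.fst_sub, Prod.snd_sub] <;>
    linarith [Int.floor_le x.1, Int.floor_le x.2, Int.lt_floor_add_one x.1,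
      Int.lt_floor_add_one x.2]

lemma ae_abs_le_toReal_eLpNorm_top {α : Type*} [MeasurableSpace α] {μ : Measure α}
    {f : α → ℝ} (hf : eLpNorm f ⊤ μ ≠ ⊤) : ∀ᵐ x ∂μ, |f x| ≤ (eLpNorm f ⊤ μ).toReal := by
  filter_upwards [ae_le_eLpNormEssSup (f := f) (μ := μ)] with x hx
  rw [eLpNorm_exponent_top] at hf ⊢
  simpa using ENNReal.toReal_mono hf hx

lemma volume_real_Qset {h₁ h₂ : ℝ} (hh₁ : 0 < h₁) (hh₂ : 0 < h₂) :
    volume.real (Qset h₁ h₂) = h₁ * h₂ := by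
  rw [Qset, Measure.volume_eq_prod, measureReal_prod_prod,
    Real.volume_real_Icc_of_le (by linarith), Real.volume_real_Icc_of_le (by linarith)]
  ring

lemma abs_nodalAvg_le_s1 {h₁ h₂ C : ℝ} (hh₁ : 0 < h₁) (hh₂ : 0 < h₂) {w : ℝ × ℝ → ℝ}
    (hw : ∀ᵐ x, |w x| ≤ C) (k l : ℤ) : |nodalAvg h₁ h₂ w k l| ≤ C := by
  have hshift : ∀ᵐ ζ : ℝ × ℝ, |w ((k : ℝ) * h₁ + ζ.1, (l : ℝ) * h₂ + ζ.2)| ≤ C :=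
    (measurePreserving_add_left volume ((k : ℝ) * h₁, (l : ℝ) * h₂)).quasiMeasurePreserving.ae hw
  have hQ : volume (Qset h₁ h₂) < ⊤ := (isCompact_Icc.prod isCompact_Icc).measure_lt_top
  have hint := norm_setIntegral_le_of_norm_le_const_ae hQ
    ((ae_restrict_of_ae hshift).mono fun _ h => (Real.norm_eq_abs _).trans_le h)
  rw [volume_real_Qset hh₁ hh₂, Real.norm_eq_abs] at hint
  rw [nodalAvg, abs_mul, abs_of_pos (inv_pos.2 (mul_pos hh₁ hh₂)),
    inv_mul_le_iff₀ (mul_pos hh₁ hh₂), mul_comm (h₁ * h₂)]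
  exact hint

lemma abs_le_of_affine {g : ℝ → ℝ} {α β a b t C : ℝ} (hg : ∀ s, g s = α + β * s)
    (ht : t ∈ Icc a b) (ha : |g a| ≤ C) (hb : |g b| ≤ C) : |g t| ≤ C := by
  rw [hg] at ha hb ⊢
  rw [abs_le] at ha hb ⊢
  obtain ⟨hat, htb⟩ := ht
  rcases le_total 0 β with hβ | hβ
  · constructor <;> nlinarith [mul_le_mul_of_nonneg_left hat hβ, mul_le_mul_of_nonneg_left htb hβ]
  · constructor <;> nlinarith [mul_le_mul_of_nonpos_left hat hβ, mul_le_mul_of_nonpos_left htb hβ]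

lemma IsBilinearOn.abs_le_of_corners {f : ℝ × ℝ → ℝ} {x₀ x₁ y₀ y₁ C : ℝ}
    (hf : IsBilinearOn f (Icc x₀ x₁ ×ˢ Icc y₀ y₁))
    (h₀₀ : |f (x₀, y₀)| ≤ C) (h₁₀ : |f (x₁, y₀)| ≤ C)
    (h₀₁ : |f (x₀, y₁)| ≤ C) (h₁₁ : |f (x₁, y₁)| ≤ C)
    {z : ℝ × ℝ} (hz : z ∈ Icc x₀ x₁ ×ˢ Icc y₀ y₁) : |f z| ≤ C := by
  obtain ⟨a, b, c, d, hf⟩ := hf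
  obtain ⟨hx, hy⟩ := hz
  set P : ℝ → ℝ → ℝ := fun x y => a + b * x + c * y + d * (x * y)
  have hx₀₁ : x₀ ≤ x₁ := hx.1.trans hx.2
  have hy₀₁ : y₀ ≤ y₁ := hy.1.trans hy.2
  have corner (x y : ℝ) (hx : x = x₀ ∨ x = x₁) (hy : y = y₀ ∨ y = y₁) : f (x, y) = P x y := by
    apply hf
    constructor
    · rcases hx with rfl | rfl <;> simp [hx₀₁]
    · rcases hy with rfl | rfl <;> simp [hy₀₁]
  have edge (x : ℝ) (hx : x = x₀ ∨ x = x₁) : |P x z.2| ≤ C := by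
    refine abs_le_of_affine (g := P x) (α := a + b * x) (β := c + d * x) (fun _ => by ring) hy ?_ ?_
    · rcases hx with rfl | rfl
      · simpa [corner] using h₀₀
      · simpa [corner] using h₁₀
    · rcases hx with rfl | rfl
      · simpa [corner] using h₀₁
      · simpa [corner] using h₁₁
  rw [hf z ⟨hx, hy⟩]
  exact abs_le_of_affine (g := fun x => P x z.2) (α := a + c * z.2) (β := b + d * z.2)
    (fun _ => by ring) hx (edge x₀ (.inl rfl)) (edge x₁ (.inr rfl))

lemma mem_cell_floor {h₁ h₂ : ℝ} (hh₁ : 0 < h₁) (hh₂ : 0 < h₂) (z : ℝ × ℝ) :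
    z ∈ cell h₁ h₂ ⌊z.1 / h₁⌋ ⌊z.2 / h₂⌋ := by
  refine ⟨⟨?_, ?_⟩, ?_, ?_⟩
  · exact (le_div_iff₀ hh₁).1 (Int.floor_le _)
  · exact ((div_lt_iff₀ hh₁).1 (Int.lt_floor_add_one _)).le
  · exact (le_div_iff₀ hh₂).1 (Int.floor_le _)
  · exact ((div_lt_iff₀ hh₂).1 (Int.lt_floor_add_one _)).le

lemma abs_le_of_isBilinearOn_cell {h₁ h₂ C : ℝ} (hh₁ : 0 < h₁) (hh₂ : 0 < h₂)
    {f : ℝ × ℝ → ℝ} (hf : ∀ k l : ℤ, IsBilinearOn f (cell h₁ h₂ k l))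
    (hnode : ∀ k l : ℤ, |f ((k : ℝ) * h₁, (l : ℝ) * h₂)| ≤ C) (z : ℝ × ℝ) : |f z| ≤ C := by
  set k := ⌊z.1 / h₁⌋
  set l := ⌊z.2 / h₂⌋
  have h₁₀ := hnode (k + 1) l
  have h₀₁ := hnode k (l + 1)
  have h₁₁ := hnode (k + 1) (l + 1)
  push_cast at h₁₀ h₀₁ h₁₁
  exact (hf k l).abs_le_of_corners (hnode k l) h₁₀ h₀₁ h₁₁ (mem_cell_floor hh₁ hh₂ z)

theorem stmt1_general (N₁ N₂ : ℕ) (hN₁ : 0 < N₁) (hN₂ : 0 < N₂) (h₁ h₂ : ℝ)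
    (hh₁ : h₁ = 1 / N₁) (hh₂ : h₂ = 1 / N₂)
    (w : ℝ × ℝ → ℝ) (hwper : Periodic2 w)
    (Pw : ℝ × ℝ → ℝ) (hPw : IsInterpolant h₁ h₂ w Pw) :
    eLpNorm Pw ⊤ (volume.restrict Omg) ≤ eLpNorm w ⊤ (volume.restrict Omg) := by
  obtain ⟨-, -, hbil, hnod⟩ := hPw
  have hh₁pos : 0 < h₁ := by rw [hh₁]; positivity
  have hh₂pos : 0 < h₂ := by rw [hh₂]; positivity
  set M := eLpNorm w ⊤ (volume.restrict Omg)
  rcases eq_or_ne M ⊤ with hM | hM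
  · rw [hM]
    exact le_top
  have hw : ∀ᵐ x, |w x| ≤ M.toReal :=
    hwper.ae_of_ae_restrict_Omg (p := (|·| ≤ M.toReal)) (ae_abs_le_toReal_eLpNorm_top hM)
  have hPw : ∀ z, |Pw z| ≤ M.toReal :=
    abs_le_of_isBilinearOn_cell hh₁pos hh₂pos hbil
      fun k l => hnod k l ▸ abs_nodalAvg_le_s1 hh₁pos hh₂pos hw k l
  calc eLpNorm Pw ⊤ (volume.restrict Omg)
      ≤ ENNReal.ofReal M.toReal := by
        rw [eLpNorm_exponent_top]
        exact eLpNormEssSup_le_of_ae_bound (ae_of_all _ hPw)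
    _ = M := ENNReal.ofReal_toReal hM

/-- L^∞-stability of `Π_h`, periodic case. -/
theorem stmt1 (N₁ N₂ : ℕ) (hN₁ : 0 < N₁) (hN₂ : 0 < N₂) (h₁ h₂ : ℝ)
    (hh₁ : h₁ = 1 / N₁) (hh₂ : h₂ = 1 / N₂)
    (w : ℝ × ℝ → ℝ) (hwloc : LocallyIntegrable w volume) (hwper : Periodic2 w)
    (hwbd : eLpNorm w ⊤ (volume.restrict Omg) < ⊤)
    (Pw : ℝ × ℝ → ℝ) (hPw : IsInterpolant h₁ h₂ w Pw) :
    eLpNorm Pw ⊤ (volume.restrict Omg) ≤ eLpNorm w ⊤ (volume.restrict Omg) :=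
  stmt1_general N₁ N₂ hN₁ hN₂ h₁ h₂ hh₁ hh₂ w hwper Pw hPw
end
end

section
/- For every p with 1 ≤ p ≤ ∞ and every w ∈ L^p(Ω) with Ω = (0,1)², the boundary-corrected interpolant satisfies ‖𝒞_h w‖_{L^p(Ω)} ≤ ‖w‖_{L^p(Ω)}. -/
open MeasureTheory Set
open scoped ENNReal NNReal

noncomputable section

/-- The open unit square `Ω = (0,1)²`. -/
def OmgO : Set (ℝ × ℝ) := Ioo (0 : ℝ) 1 ×ˢ Ioo (0 : ℝ) 1

/-- The closed unit square `Ω̄ = [0,1]²`. -/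
def sqC : Set (ℝ × ℝ) := Icc (0 : ℝ) 1 ×ˢ Icc (0 : ℝ) 1

/-- The Euclidean norm of the gradient of `w`. -/
def gradNorm (w : ℝ × ℝ → ℝ) (z : ℝ × ℝ) : ℝ :=
  Real.sqrt ((fderiv ℝ w z (1, 0)) ^ 2 + (fderiv ℝ w z (0, 1)) ^ 2)

/-- `Q_Ω(k,l) = (z_{k,l} + Q) ∩ Ω`. -/
def QOmg (h₁ h₂ : ℝ) (k l : ℤ) : Set (ℝ × ℝ) :=
  (Icc ((k : ℝ) * h₁ - h₁ / 2) ((k : ℝ) * h₁ + h₁ / 2) ×ˢ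
    Icc ((l : ℝ) * h₂ - h₂ / 2) ((l : ℝ) * h₂ + h₂ / 2)) ∩ OmgO

/-- `Ch` is the boundary-corrected interpolant `𝒞_h w` on `Ω̄ = [0,1]²`:
continuous on `Ω̄`, bilinear on each cell, with nodal values equal to the average
of `w` over `Q_Ω(k,l)`. -/
def IsCInterp (N₁ N₂ : ℕ) (h₁ h₂ : ℝ) (w Ch : ℝ × ℝ → ℝ) : Prop :=
  ContinuousOn Ch sqC ∧
    (∀ k l : ℕ, k < N₁ → l < N₂ → IsBilinearOn Ch (cell h₁ h₂ k l)) ∧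
    ∀ k l : ℕ, k ≤ N₁ → l ≤ N₂ →
      Ch ((k : ℝ) * h₁, (l : ℝ) * h₂) =
        (volume (QOmg h₁ h₂ k l)).toReal⁻¹ * ∫ y in QOmg h₁ h₂ (k : ℤ) (l : ℤ), w y

/-! On a cell `T` the bilinear interpolant is a convex combination of its four nodal values, the
weights being products of one-dimensional barycentric coordinates; each weight integrates to
`|T|/4`. By convexity of `t ↦ |t|^p`, `∫_T |𝒞_h w|^p` is at most a quarter of `|T|`
times the sum of the nodal values `|W|^p`. Summing over the cells, the node `z_{k,l}` collects one
quarter cell from each cell it belongs to, i.e. exactly `|Q_Ω(k,l)|`; Jensen's inequality on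
`Q_Ω(k,l)` gives `|W_{k,l}|^p |Q_Ω(k,l)| ≤ ∫_{Q_Ω(k,l)} |w|^p`, and the sets `Q_Ω(k,l)` tile `Ω`
up to null sets. For `p = ∞` the convex combination bounds `|𝒞_h w|` by the largest nodal value,
and an average is bounded by the essential supremum. -/

def endpoint (a b : ℝ) (i : Bool) : ℝ := bif i then b else a

def baryWeight (a b : ℝ) (i : Bool) (x : ℝ) : ℝ :=
  bif i then (x - a) / (b - a) else (b - x) / (b - a)

section Interval

variable {a b x : ℝ}

lemma baryWeight_nonneg (hx : x ∈ Icc a b) (i : Bool) : 0 ≤ baryWeight a b i x := by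
  have hab : 0 ≤ b - a := by linarith [hx.1, hx.2]
  cases i
  · exact div_nonneg (by linarith [hx.2]) hab
  · exact div_nonneg (by linarith [hx.1]) hab

lemma sum_baryWeight (hab : a < b) : ∑ i, baryWeight a b i x = 1 := by
  have : b - a ≠ 0 := by linarith
  simp only [Fintype.sum_bool, baryWeight, cond_true, cond_false]
  field_simp
  ring

lemma sum_baryWeight_mul_endpoint (hab : a < b) :
    ∑ i, baryWeight a b i x * endpoint a b i = x := by
  have : b - a ≠ 0 := by linarith
  simp only [Fintype.sum_bool, baryWeight, endpoint, cond_true, cond_false]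
  field_simp
  ring

@[fun_prop]
lemma continuous_baryWeight (a b : ℝ) (i : Bool) : Continuous (baryWeight a b i) := by
  unfold baryWeight
  cases i <;> simp only [cond_true, cond_false] <;> fun_prop

lemma lintegral_baryWeight (hab : a < b) (i : Bool) :
    ∫⁻ x in Icc a b, ENNReal.ofReal (baryWeight a b i x) = ENNReal.ofReal ((b - a) / 2) := by
  rw [← ofReal_integral_eq_lintegral_ofReal (continuous_baryWeight a b i).integrableOn_Icc
    ((ae_restrict_iff' measurableSet_Icc).mpr (ae_of_all _ fun x hx ↦ baryWeight_nonneg hx i)),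
    integral_Icc_eq_integral_Ioc, ← intervalIntegral.integral_of_le hab.le]
  congr 1
  have : b - a ≠ 0 := by linarith
  cases i
  · simp [baryWeight, intervalIntegral.integral_div,
      intervalIntegral.integral_comp_sub_left (fun x ↦ x)]
    field_simp
  · simp [baryWeight, intervalIntegral.integral_div]
    field_simp
    ring

end Interval

def rectCorner (a b c d : ℝ) (i : Bool × Bool) : ℝ × ℝ := (endpoint a b i.1, endpoint c d i.2)

def rectWeight (a b c d : ℝ) (i : Bool × Bool) (z : ℝ × ℝ) : ℝ :=
  baryWeight a b i.1 z.1 * baryWeight c d i.2 z.2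

@[fun_prop]
lemma continuous_rectWeight (a b c d : ℝ) (i : Bool × Bool) : Continuous (rectWeight a b c d i) :=
  ((continuous_baryWeight a b i.1).comp continuous_fst).mul
    ((continuous_baryWeight c d i.2).comp continuous_snd)

section Rectangle

variable {a b c d : ℝ} {f : ℝ × ℝ → ℝ} {z : ℝ × ℝ}

lemma rectCorner_mem (hab : a ≤ b) (hcd : c ≤ d) (i : Bool × Bool) :
    rectCorner a b c d i ∈ Icc a b ×ˢ Icc c d := by
  obtain ⟨i, j⟩ := i
  cases i <;> cases j <;> simp [rectCorner, endpoint, hab, hcd]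

lemma rectWeight_nonneg (hz : z ∈ Icc a b ×ˢ Icc c d) (i : Bool × Bool) :
    0 ≤ rectWeight a b c d i z :=
  mul_nonneg (baryWeight_nonneg hz.1 i.1) (baryWeight_nonneg hz.2 i.2)

lemma sum_ofReal_rectWeight (hab : a < b) (hcd : c < d) (hz : z ∈ Icc a b ×ˢ Icc c d) :
    ∑ i, ENNReal.ofReal (rectWeight a b c d i z) = 1 := by
  rw [← ENNReal.ofReal_sum_of_nonneg fun i _ ↦ rectWeight_nonneg hz i]
  simp only [rectWeight, Fintype.sum_prod_type, ← Finset.mul_sum, ← Finset.sum_mul,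
    sum_baryWeight hab, sum_baryWeight hcd, one_mul, ENNReal.ofReal_one]

lemma IsBilinearOn.eq_sum_rectWeight (hf : IsBilinearOn f (Icc a b ×ˢ Icc c d))
    (hab : a < b) (hcd : c < d) (hz : z ∈ Icc a b ×ˢ Icc c d) :
    f z = ∑ i, rectWeight a b c d i z * f (rectCorner a b c d i) := by
  obtain ⟨α, β, γ, δ, hf⟩ := hf
  simp only [hf z hz, hf _ (rectCorner_mem hab.le hcd.le _)]
  have hx := sum_baryWeight hab (x := z.1)
  have hy := sum_baryWeight hcd (x := z.2)
  have hx' := sum_baryWeight_mul_endpoint hab (x := z.1)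
  have hy' := sum_baryWeight_mul_endpoint hcd (x := z.2)
  simp only [Fintype.sum_bool] at hx hy hx' hy'
  simp only [rectWeight, rectCorner, Fintype.sum_prod_type, Fintype.sum_bool]
  -- the tensor product of `∑ u = 1` and `∑ u X = x` with `∑ v = 1` and `∑ v Y = y`
  set u := baryWeight a b
  set v := baryWeight c d
  set X := endpoint a b
  set Y := endpoint c d
  linear_combination (-α - γ * (v true z.2 * Y true + v false z.2 * Y false)) * hx
    + (-α * (u true z.1 + u false z.1) - β * (u true z.1 * X true + u false z.1 * X false)) * hy
    + (-β - δ * (v true z.2 * Y true + v false z.2 * Y false)) * hx'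
    + (-γ - δ * z.1) * hy'

lemma IsBilinearOn.enorm_le_sum_rectWeight (hf : IsBilinearOn f (Icc a b ×ˢ Icc c d))
    (hab : a < b) (hcd : c < d) (hz : z ∈ Icc a b ×ˢ Icc c d) :
    ‖f z‖ₑ ≤ ∑ i, ENNReal.ofReal (rectWeight a b c d i z) * ‖f (rectCorner a b c d i)‖ₑ := by
  rw [hf.eq_sum_rectWeight hab hcd hz]
  refine (enorm_sum_le _ _).trans (Finset.sum_le_sum fun i _ ↦ ?_)
  rw [enorm_mul, Real.enorm_of_nonneg (rectWeight_nonneg hz i)]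

lemma IsBilinearOn.enorm_le_of_forall_corner (hf : IsBilinearOn f (Icc a b ×ˢ Icc c d))
    (hab : a < b) (hcd : c < d) (hz : z ∈ Icc a b ×ˢ Icc c d) {M : ℝ≥0∞}
    (hM : ∀ i, ‖f (rectCorner a b c d i)‖ₑ ≤ M) : ‖f z‖ₑ ≤ M :=
  calc ‖f z‖ₑ ≤ ∑ i, ENNReal.ofReal (rectWeight a b c d i z) * M :=
        (hf.enorm_le_sum_rectWeight hab hcd hz).trans (by gcongr with i; exact hM i)
    _ = M := by rw [← Finset.sum_mul, sum_ofReal_rectWeight hab hcd hz, one_mul]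

lemma IsBilinearOn.enorm_rpow_le_sum_rectWeight (hf : IsBilinearOn f (Icc a b ×ˢ Icc c d))
    (hab : a < b) (hcd : c < d) (hz : z ∈ Icc a b ×ˢ Icc c d) {q : ℝ} (hq : 1 ≤ q) :
    ‖f z‖ₑ ^ q ≤ ∑ i, ENNReal.ofReal (rectWeight a b c d i z) * ‖f (rectCorner a b c d i)‖ₑ ^ q :=
  calc ‖f z‖ₑ ^ q
      ≤ (∑ i, ENNReal.ofReal (rectWeight a b c d i z) * ‖f (rectCorner a b c d i)‖ₑ) ^ q := by
        gcongr
        exact hf.enorm_le_sum_rectWeight hab hcd hz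
    _ ≤ _ := ENNReal.rpow_arith_mean_le_arith_mean_rpow _ _ _
        (sum_ofReal_rectWeight hab hcd hz) hq

lemma lintegral_rectWeight (hab : a < b) (hcd : c < d) (i : Bool × Bool) :
    ∫⁻ z in Icc a b ×ˢ Icc c d, ENNReal.ofReal (rectWeight a b c d i z) =
      ENNReal.ofReal ((b - a) / 2) * ENNReal.ofReal ((d - c) / 2) := by
  have hsplit : ∀ z ∈ Icc a b ×ˢ Icc c d, ENNReal.ofReal (rectWeight a b c d i z) =
      ENNReal.ofReal (baryWeight a b i.1 z.1) * ENNReal.ofReal (baryWeight c d i.2 z.2) :=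
    fun z hz ↦ ENNReal.ofReal_mul (baryWeight_nonneg hz.1 i.1)
  rw [setLIntegral_congr_fun (measurableSet_Icc.prod measurableSet_Icc) hsplit,
    Measure.volume_eq_prod, ← Measure.prod_restrict,
    lintegral_prod_mul (f := fun x ↦ ENNReal.ofReal (baryWeight a b i.1 x))
      (g := fun y ↦ ENNReal.ofReal (baryWeight c d i.2 y)) (by fun_prop) (by fun_prop),
    lintegral_baryWeight hab, lintegral_baryWeight hcd]

lemma IsBilinearOn.lintegral_enorm_rpow_le (hf : IsBilinearOn f (Icc a b ×ˢ Icc c d))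
    (hab : a < b) (hcd : c < d) {q : ℝ} (hq : 1 ≤ q) :
    ∫⁻ z in Icc a b ×ˢ Icc c d, ‖f z‖ₑ ^ q ≤
      ENNReal.ofReal ((b - a) / 2) * ENNReal.ofReal ((d - c) / 2) *
        ∑ i, ‖f (rectCorner a b c d i)‖ₑ ^ q :=
  calc ∫⁻ z in Icc a b ×ˢ Icc c d, ‖f z‖ₑ ^ q
      ≤ ∫⁻ z in Icc a b ×ˢ Icc c d,
          ∑ i, ENNReal.ofReal (rectWeight a b c d i z) * ‖f (rectCorner a b c d i)‖ₑ ^ q :=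
        setLIntegral_mono' (measurableSet_Icc.prod measurableSet_Icc)
          fun z hz ↦ hf.enorm_rpow_le_sum_rectWeight hab hcd hz hq
    _ = _ := by
        rw [lintegral_finsetSum _ fun i _ ↦ by fun_prop, Finset.mul_sum]
        simp only [lintegral_mul_const _ (continuous_rectWeight a b c d _).measurable.ennreal_ofReal,
          lintegral_rectWeight hab hcd]

end Rectangle

lemma lintegral_biUnion_finset_le {ι α : Type*} [MeasurableSpace α] {μ : Measure α}
    (s : Finset ι) (t : ι → Set α) (f : α → ℝ≥0∞) :
    ∫⁻ a in ⋃ i ∈ s, t i, f a ∂μ ≤ ∑ i ∈ s, ∫⁻ a in t i, f a ∂μ := by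
  rw [← Finset.tsum_subtype', ← lintegral_sum_measure]
  exact lintegral_mono' (Measure.restrict_biUnion_le s.countable_toSet) le_rfl

section Average

variable {α : Type*} [MeasurableSpace α] {μ : Measure α} {S : Set α} {w : α → ℝ}

lemma enorm_setAverage_le_eLpNorm_top :
    ‖⨍ x in S, w x ∂μ‖ₑ ≤ eLpNorm w ∞ (μ.restrict S) := by
  rw [setAverage_eq', eLpNorm_exponent_top]
  calc ‖∫ x, w x ∂(μ S)⁻¹ • μ.restrict S‖ₑ
      ≤ ∫⁻ x, ‖w x‖ₑ ∂(μ S)⁻¹ • μ.restrict S := enorm_integral_le_lintegral_enorm _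
    _ ≤ ∫⁻ _, eLpNormEssSup w (μ.restrict S) ∂(μ S)⁻¹ • μ.restrict S :=
        lintegral_mono_ae (Measure.ae_smul_measure ae_le_eLpNormEssSup _)
    _ = eLpNormEssSup w (μ.restrict S) * ((μ S)⁻¹ * μ S) := by
        simp [lintegral_const]
    _ ≤ eLpNormEssSup w (μ.restrict S) := mul_le_of_le_one_right' (ENNReal.inv_mul_le_one _)

lemma enorm_setAverage_rpow_mul_le {p : ℝ≥0∞} (hp1 : 1 ≤ p) (hp : p ≠ ∞)
    (hw : MemLp w p (μ.restrict S)) (h0 : μ S ≠ 0) (hS : μ S ≠ ∞) :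
    ‖⨍ x in S, w x ∂μ‖ₑ ^ p.toReal * μ S ≤ ∫⁻ x in S, ‖w x‖ₑ ^ p.toReal ∂μ := by
  have : IsFiniteMeasure (μ.restrict S) := isFiniteMeasure_restrict.mpr hS
  set q := p.toReal
  have hq : 1 ≤ q := by simpa using ENNReal.toReal_mono hp hp1
  have hμS : 0 < μ.real S := ENNReal.toReal_pos h0 hS
  have hw1 : IntegrableOn w S μ := memLp_one_iff_integrable.mp (hw.mono_exponent hp1)
  have hwq : IntegrableOn (fun x ↦ |w x| ^ q) S μ := by
    simpa [IntegrableOn] using hw.integrable_norm_rpow (by positivity) hp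
  have jensen : (⨍ x in S, |w x| ∂μ) ^ q ≤ ⨍ x in S, |w x| ^ q ∂μ :=
    (convexOn_rpow hq).map_set_average_le
      (fun x _ ↦ (Real.continuousAt_rpow_const x q (by right; positivity)).continuousWithinAt)
      isClosed_Ici h0 hS (ae_of_all _ fun x ↦ abs_nonneg (w x)) hw1.abs hwq
  have habs : |⨍ x in S, w x ∂μ| ≤ ⨍ x in S, |w x| ∂μ := by
    simpa [setAverage_eq, abs_mul, abs_of_pos hμS] using
      mul_le_mul_of_nonneg_left (abs_integral_le_integral_abs (f := w) (μ := μ.restrict S))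
        (inv_nonneg.mpr hμS.le)
  have hreal : |⨍ x in S, w x ∂μ| ^ q * μ.real S ≤ ∫ x in S, |w x| ^ q ∂μ := by
    rw [← le_div_iff₀ hμS, div_eq_inv_mul, ← smul_eq_mul, ← setAverage_eq]
    exact (Real.rpow_le_rpow (abs_nonneg _) habs (by positivity)).trans jensen
  have hofReal : ∀ y : ℝ, ‖y‖ₑ ^ q = ENNReal.ofReal (|y| ^ q) := fun y ↦ by
    rw [Real.enorm_eq_ofReal_abs, ENNReal.ofReal_rpow_of_nonneg (abs_nonneg y) (by positivity)]
  simp only [hofReal]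
  rw [← ofReal_integral_eq_lintegral_ofReal hwq (ae_of_all _ fun x ↦ by positivity),
    ← ENNReal.ofReal_toReal hS, ← ENNReal.ofReal_mul (by positivity)]
  exact ENNReal.ofReal_le_ofReal hreal

end Average

def dualCell (h : ℝ) (k : ℕ) : Set ℝ := Icc (k * h - h / 2) (k * h + h / 2) ∩ Ioo 0 1

/-- The number of cells of the uniform grid `0 < 1/N < ⋯ < 1` having the node `k` as a vertex. -/
def numCellsAt (N k : ℕ) : ℕ := (if 0 < k then 1 else 0) + (if k < N then 1 else 0)

lemma numCellsAt_ne_zero {N k : ℕ} (hN : 0 < N) : numCellsAt N k ≠ 0 := by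
  unfold numCellsAt; split_ifs <;> omega

lemma sum_range_sum_bool_eq_sum_numCellsAt_smul {M : Type*} [AddCommMonoid M] (N : ℕ)
    (G : ℕ → M) :
    ∑ j ∈ Finset.range N, ∑ a : Bool, G (j + a.toNat) =
      ∑ k ∈ Finset.range (N + 1), numCellsAt N k • G k := by
  simp only [Fintype.sum_bool, Bool.toNat_true, Bool.toNat_false, add_zero,
    Finset.sum_add_distrib, numCellsAt, add_smul, ite_smul, one_smul, zero_smul]
  rw [Finset.sum_range_succ' (fun k ↦ if 0 < k then G k else 0),
    Finset.sum_range_succ (fun k ↦ if k < N then G k else 0)]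
  simp +contextual [Finset.sum_ite_of_true]

section UnitInterval

variable {N : ℕ} {h : ℝ}

lemma volume_dualCell (hN : 0 < N) (hh : h = 1 / N) {k : ℕ} (hk : k ≤ N) :
    volume (dualCell h k) = numCellsAt N k • ENNReal.ofReal (h / 2) := by
  have hNh : (N : ℝ) * h = 1 := by rw [hh]; field_simp
  have hh0 : 0 < h := by rw [hh]; positivity
  have hh1 : h ≤ 1 := by rw [hh, div_le_one (by positivity)]; exact_mod_cast hN
  have hvol : volume (dualCell h k) = ENNReal.ofReal ((k * h + h / 2) ⊓ 1 - (k * h - h / 2) ⊔ 0) := by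
    rw [dualCell, measure_congr (ae_eq_refl _ |>.inter Ioo_ae_eq_Icc), Icc_inter_Icc,
      Real.volume_Icc]
  rw [hvol]
  rcases Nat.eq_zero_or_pos k with rfl | hk0
  · rw [Nat.cast_zero, zero_mul, zero_add, zero_sub, min_eq_left (by linarith),
      max_eq_right (by linarith), sub_zero]
    simp [numCellsAt, hN]
  rcases hk.eq_or_lt with rfl | hkN
  · rw [hNh, min_eq_right (by linarith), max_eq_left (by linarith)]
    simp [numCellsAt, hk0]
  · have hk1 : (k : ℝ) + 1 ≤ N := by exact_mod_cast hkN
    have hk0' : (1 : ℝ) ≤ k := by exact_mod_cast hk0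
    rw [min_eq_left (by nlinarith), max_eq_left (by nlinarith)]
    simp only [numCellsAt, hk0, hkN, if_true, Nat.reduceAdd, nsmul_eq_mul, Nat.cast_ofNat]
    rw [← ENNReal.ofReal_ofNat, ← ENNReal.ofReal_mul (by norm_num)]
    ring_nf

lemma aedisjoint_dualCell (hh : 0 ≤ h) {k k' : ℕ} (hkk : k ≠ k') :
    AEDisjoint volume (dualCell h k) (dualCell h k') := by
  wlog hlt : k < k' generalizing k k'
  · exact (this hkk.symm (by omega)).symm
  have hlt' : (k : ℝ) + 1 ≤ k' := by exact_mod_cast hlt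
  refine measure_mono_null (t := Icc (k' * h - h / 2) (k * h + h / 2))
    (fun x hx ↦ ⟨hx.2.1.1, hx.1.1.2⟩) ?_
  rw [Real.volume_Icc, ENNReal.ofReal_eq_zero]
  nlinarith

lemma exists_mem_cell (hN : 0 < N) (hh : h = 1 / N) {x : ℝ} (hx : x ∈ Ioo 0 1) :
    ∃ j < N, x ∈ Icc (j * h) ((j + 1) * h) := by
  have hN' : (0 : ℝ) < N := by exact_mod_cast hN
  refine ⟨⌊x * N⌋₊, ?_, ?_⟩
  · exact (Nat.floor_lt (by nlinarith [hx.1])).mpr (by nlinarith [hx.2])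
  · rw [hh, mem_Icc, ← div_eq_mul_one_div, ← div_eq_mul_one_div, div_le_iff₀ hN', le_div_iff₀ hN']
    exact ⟨Nat.floor_le (by nlinarith [hx.1]), (Nat.lt_floor_add_one _).le⟩

end UnitInterval

lemma QOmg_natCast (h₁ h₂ : ℝ) (k l : ℕ) :
    QOmg h₁ h₂ k l = dualCell h₁ k ×ˢ dualCell h₂ l := by
  simp only [QOmg, OmgO, dualCell, Int.cast_natCast, prod_inter_prod]

lemma cell_natCast (h₁ h₂ : ℝ) (j i : ℕ) :
    cell h₁ h₂ j i = Icc (j * h₁) ((j + 1) * h₁) ×ˢ Icc (i * h₂) ((i + 1) * h₂) := by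
  simp only [cell, Int.cast_natCast]

lemma rectCorner_cell (h₁ h₂ : ℝ) (j i : ℕ) (c : Bool × Bool) :
    rectCorner (j * h₁) ((j + 1) * h₁) (i * h₂) ((i + 1) * h₂) c =
      (((j + c.1.toNat : ℕ) : ℝ) * h₁, ((i + c.2.toNat : ℕ) : ℝ) * h₂) := by
  obtain ⟨a, b⟩ := c
  cases a <;> cases b <;> simp [rectCorner, endpoint]

section Grid

variable {N₁ N₂ : ℕ} {h₁ h₂ : ℝ}

lemma volume_QOmg (hN₁ : 0 < N₁) (hN₂ : 0 < N₂) (hh₁ : h₁ = 1 / N₁) (hh₂ : h₂ = 1 / N₂)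
    {k l : ℕ} (hk : k ≤ N₁) (hl : l ≤ N₂) :
    volume (QOmg h₁ h₂ k l) =
      (numCellsAt N₁ k • ENNReal.ofReal (h₁ / 2)) * (numCellsAt N₂ l • ENNReal.ofReal (h₂ / 2)) := by
  rw [QOmg_natCast, Measure.volume_eq_prod, Measure.prod_prod, volume_dualCell hN₁ hh₁ hk,
    volume_dualCell hN₂ hh₂ hl]

lemma aedisjoint_QOmg (hh₁ : 0 ≤ h₁) (hh₂ : 0 ≤ h₂) {k l k' l' : ℕ} (hne : (k, l) ≠ (k', l')) :
    AEDisjoint volume (QOmg h₁ h₂ k l) (QOmg h₁ h₂ k' l') := by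
  rw [QOmg_natCast, QOmg_natCast, AEDisjoint, prod_inter_prod, Measure.volume_eq_prod,
    Measure.prod_prod]
  rcases eq_or_ne k k' with rfl | hk
  · rw [aedisjoint_dualCell hh₂ (by simpa using hne), mul_zero]
  · rw [aedisjoint_dualCell hh₁ hk, zero_mul]

lemma OmgO_subset_iUnion_cell (hN₁ : 0 < N₁) (hN₂ : 0 < N₂) (hh₁ : h₁ = 1 / N₁)
    (hh₂ : h₂ = 1 / N₂) :
    OmgO ⊆ ⋃ ji ∈ Finset.range N₁ ×ˢ Finset.range N₂, cell h₁ h₂ ji.1 ji.2 := by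
  rintro ⟨x, y⟩ ⟨hx, hy⟩
  obtain ⟨j, hj, hxj⟩ := exists_mem_cell hN₁ hh₁ hx
  obtain ⟨i, hi, hyi⟩ := exists_mem_cell hN₂ hh₂ hy
  exact mem_biUnion (x := (j, i)) (by simp [hj, hi]) (by rw [cell_natCast]; exact ⟨hxj, hyi⟩)

lemma sum_cells_sum_corners_eq {M : Type*} [AddCommMonoid M] (N₁ N₂ : ℕ) (G : ℕ → ℕ → M) :
    ∑ ji ∈ Finset.range N₁ ×ˢ Finset.range N₂, ∑ c : Bool × Bool,
        G (ji.1 + c.1.toNat) (ji.2 + c.2.toNat) =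
      ∑ kl ∈ Finset.range (N₁ + 1) ×ˢ Finset.range (N₂ + 1),
        (numCellsAt N₁ kl.1 * numCellsAt N₂ kl.2) • G kl.1 kl.2 := by
  simp only [Finset.sum_product, Fintype.sum_prod_type, mul_smul]
  calc ∑ j ∈ Finset.range N₁, ∑ i ∈ Finset.range N₂, ∑ a : Bool, ∑ b : Bool,
        G (j + a.toNat) (i + b.toNat)
      = ∑ j ∈ Finset.range N₁, ∑ a : Bool, ∑ i ∈ Finset.range N₂, ∑ b : Bool,
          G (j + a.toNat) (i + b.toNat) := by
        refine Finset.sum_congr rfl fun j _ ↦ Finset.sum_comm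
    _ = _ := by
        simp only [sum_range_sum_bool_eq_sum_numCellsAt_smul N₂, ← Finset.smul_sum]
        exact sum_range_sum_bool_eq_sum_numCellsAt_smul N₁
          (fun k ↦ ∑ l ∈ Finset.range (N₂ + 1), numCellsAt N₂ l • G k l)

lemma sum_nodes_le_lintegral (hN₁ : 0 < N₁) (hN₂ : 0 < N₂) (hh₁ : h₁ = 1 / N₁)
    (hh₂ : h₂ = 1 / N₂) {p : ℝ≥0∞} (hp1 : 1 ≤ p) (hp : p ≠ ∞)
    {w : ℝ × ℝ → ℝ} (hw : MemLp w p (volume.restrict OmgO)) :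
    ∑ kl ∈ Finset.range (N₁ + 1) ×ˢ Finset.range (N₂ + 1),
        volume (QOmg h₁ h₂ kl.1 kl.2) * ‖⨍ y in QOmg h₁ h₂ kl.1 kl.2, w y‖ₑ ^ p.toReal ≤
      ∫⁻ z in OmgO, ‖w z‖ₑ ^ p.toReal := by
  have hh₁0 : 0 < h₁ := by rw [hh₁]; positivity
  have hh₂0 : 0 < h₂ := by rw [hh₂]; positivity
  calc _ ≤ ∑ kl ∈ Finset.range (N₁ + 1) ×ˢ Finset.range (N₂ + 1),
          ∫⁻ y in QOmg h₁ h₂ kl.1 kl.2, ‖w y‖ₑ ^ p.toReal := by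
        gcongr with kl hkl
        obtain ⟨hk, hl⟩ := Finset.mem_product.mp hkl
        rw [Finset.mem_range] at hk hl
        have hvol := volume_QOmg hN₁ hN₂ hh₁ hh₂ (Nat.le_of_lt_succ hk) (Nat.le_of_lt_succ hl)
        rw [mul_comm]
        refine enorm_setAverage_rpow_mul_le hp1 hp
          (hw.mono_measure (Measure.restrict_mono inter_subset_right le_rfl)) ?_ ?_
        · simp [hvol, numCellsAt_ne_zero hN₁, numCellsAt_ne_zero hN₂, hh₁0, hh₂0]
        · simp [hvol, ENNReal.mul_eq_top]
    _ = ∫⁻ y in ⋃ kl ∈ Finset.range (N₁ + 1) ×ˢ Finset.range (N₂ + 1), QOmg h₁ h₂ kl.1 kl.2,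
          ‖w y‖ₑ ^ p.toReal :=
        (lintegral_biUnion_finset₀ (fun kl _ kl' _ hne ↦ aedisjoint_QOmg hh₁0.le hh₂0.le hne)
          (fun _ _ ↦ (measurableSet_Icc.prod measurableSet_Icc |>.inter
            (measurableSet_Ioo.prod measurableSet_Ioo)).nullMeasurableSet) _).symm
    _ ≤ _ := lintegral_mono_set (iUnion₂_subset fun _ _ ↦ inter_subset_right)

end Grid

section Interpolant

variable {N₁ N₂ : ℕ} {h₁ h₂ : ℝ} {f : ℝ × ℝ → ℝ}

lemma enorm_le_of_forall_node (hN₁ : 0 < N₁) (hN₂ : 0 < N₂) (hh₁ : h₁ = 1 / N₁)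
    (hh₂ : h₂ = 1 / N₂) (hf : ∀ j i : ℕ, j < N₁ → i < N₂ → IsBilinearOn f (cell h₁ h₂ j i))
    {M : ℝ≥0∞} (hM : ∀ k l : ℕ, k ≤ N₁ → l ≤ N₂ → ‖f (k * h₁, l * h₂)‖ₑ ≤ M) :
    ∀ z ∈ OmgO, ‖f z‖ₑ ≤ M := by
  have hh₁0 : 0 < h₁ := by rw [hh₁]; positivity
  have hh₂0 : 0 < h₂ := by rw [hh₂]; positivity
  intro z hz
  obtain ⟨ji, hji, hz⟩ := mem_iUnion₂.mp (OmgO_subset_iUnion_cell hN₁ hN₂ hh₁ hh₂ hz)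
  obtain ⟨hj, hi⟩ := Finset.mem_product.mp hji
  rw [Finset.mem_range] at hj hi
  have hf := hf ji.1 ji.2 hj hi
  rw [cell_natCast] at hf hz
  refine hf.enorm_le_of_forall_corner (by nlinarith) (by nlinarith) hz fun c ↦ ?_
  rw [rectCorner_cell]
  exact hM _ _ (by cases c.1 <;> simp <;> omega) (by cases c.2 <;> simp <;> omega)

lemma lintegral_enorm_rpow_le_sum_nodes (hN₁ : 0 < N₁) (hN₂ : 0 < N₂) (hh₁ : h₁ = 1 / N₁)
    (hh₂ : h₂ = 1 / N₂) (hf : ∀ j i : ℕ, j < N₁ → i < N₂ → IsBilinearOn f (cell h₁ h₂ j i))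
    {q : ℝ} (hq : 1 ≤ q) :
    ∫⁻ z in OmgO, ‖f z‖ₑ ^ q ≤
      ∑ kl ∈ Finset.range (N₁ + 1) ×ˢ Finset.range (N₂ + 1),
        volume (QOmg h₁ h₂ kl.1 kl.2) * ‖f (kl.1 * h₁, kl.2 * h₂)‖ₑ ^ q := by
  have hh₁0 : 0 < h₁ := by rw [hh₁]; positivity
  have hh₂0 : 0 < h₂ := by rw [hh₂]; positivity
  set G : ℕ → ℕ → ℝ≥0∞ := fun k l ↦ ‖f (k * h₁, l * h₂)‖ₑ ^ q
  calc ∫⁻ z in OmgO, ‖f z‖ₑ ^ q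
      ≤ ∫⁻ z in ⋃ ji ∈ Finset.range N₁ ×ˢ Finset.range N₂, cell h₁ h₂ ji.1 ji.2, ‖f z‖ₑ ^ q :=
        lintegral_mono_set (OmgO_subset_iUnion_cell hN₁ hN₂ hh₁ hh₂)
    _ ≤ ∑ ji ∈ Finset.range N₁ ×ˢ Finset.range N₂, ∫⁻ z in cell h₁ h₂ ji.1 ji.2, ‖f z‖ₑ ^ q :=
        lintegral_biUnion_finset_le _ _ _
    _ ≤ ∑ ji ∈ Finset.range N₁ ×ˢ Finset.range N₂,
          ENNReal.ofReal (h₁ / 2) * ENNReal.ofReal (h₂ / 2) *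
            ∑ c : Bool × Bool, G (ji.1 + c.1.toNat) (ji.2 + c.2.toNat) := by
        gcongr with ji hji
        obtain ⟨hj, hi⟩ := Finset.mem_product.mp hji
        rw [Finset.mem_range] at hj hi
        have hf := hf ji.1 ji.2 hj hi
        rw [cell_natCast] at hf ⊢
        refine (hf.lintegral_enorm_rpow_le (by nlinarith) (by nlinarith) hq).trans_eq ?_
        simp only [rectCorner_cell, G]
        congr 3 <;> ring
    _ = ∑ kl ∈ Finset.range (N₁ + 1) ×ˢ Finset.range (N₂ + 1),
          volume (QOmg h₁ h₂ kl.1 kl.2) * G kl.1 kl.2 := by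
        rw [← Finset.mul_sum, sum_cells_sum_corners_eq, Finset.mul_sum]
        refine Finset.sum_congr rfl fun kl hkl ↦ ?_
        obtain ⟨hk, hl⟩ := Finset.mem_product.mp hkl
        rw [Finset.mem_range] at hk hl
        rw [volume_QOmg hN₁ hN₂ hh₁ hh₂ (by omega) (by omega)]
        simp only [nsmul_eq_mul, Nat.cast_mul]
        ring

end Interpolant

lemma IsCInterp.apply_node_eq_setAverage {N₁ N₂ : ℕ} {h₁ h₂ : ℝ} {w Ch : ℝ × ℝ → ℝ}
    (hCh : IsCInterp N₁ N₂ h₁ h₂ w Ch) {k l : ℕ} (hk : k ≤ N₁) (hl : l ≤ N₂) :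
    Ch (k * h₁, l * h₂) = ⨍ y in QOmg h₁ h₂ k l, w y := by
  rw [hCh.2.2 k l hk hl, setAverage_eq, smul_eq_mul, measureReal_def]

/-- L^p-stability of `𝒞_h`, `1 ≤ p ≤ ∞`. -/
theorem stmt13 (N₁ N₂ : ℕ) (hN₁ : 0 < N₁) (hN₂ : 0 < N₂) (h₁ h₂ : ℝ)
    (hh₁ : h₁ = 1 / N₁) (hh₂ : h₂ = 1 / N₂)
    (p : ℝ≥0∞) (hp : 1 ≤ p)
    (w : ℝ × ℝ → ℝ) (hwp : MemLp w p (volume.restrict OmgO))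
    (Ch : ℝ × ℝ → ℝ) (hCh : IsCInterp N₁ N₂ h₁ h₂ w Ch) :
    eLpNorm Ch p (volume.restrict OmgO) ≤ eLpNorm w p (volume.restrict OmgO) := by
  rcases eq_or_ne p ∞ with rfl | hp_top
  · rw [eLpNorm_exponent_top]
    refine eLpNormEssSup_le_of_ae_enorm_bound <| (ae_restrict_iff'
      (measurableSet_Ioo.prod measurableSet_Ioo)).mpr <| ae_of_all _ <|
        enorm_le_of_forall_node hN₁ hN₂ hh₁ hh₂ hCh.2.1 fun k l hk hl ↦ ?_
    rw [hCh.apply_node_eq_setAverage hk hl]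
    exact enorm_setAverage_le_eLpNorm_top.trans
      (eLpNorm_mono_measure _ (Measure.restrict_mono inter_subset_right le_rfl))
  · have hp0 : p ≠ 0 := (zero_lt_one.trans_le hp).ne'
    rw [eLpNorm_eq_lintegral_rpow_enorm_toReal hp0 hp_top,
      eLpNorm_eq_lintegral_rpow_enorm_toReal hp0 hp_top]
    refine ENNReal.rpow_le_rpow ?_ (by positivity)
    calc _ ≤ _ := lintegral_enorm_rpow_le_sum_nodes hN₁ hN₂ hh₁ hh₂ hCh.2.1
          (by simpa using ENNReal.toReal_mono hp_top hp)
      _ = _ := Finset.sum_congr rfl fun kl hkl ↦ by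
          obtain ⟨hk, hl⟩ := Finset.mem_product.mp hkl
          rw [Finset.mem_range] at hk hl
          rw [hCh.apply_node_eq_setAverage (by omega) (by omega)]
      _ ≤ _ := sum_nodes_le_lintegral hN₁ hN₂ hh₁ hh₂ hp hp_top hwp
end
end

section
/- There exists a constant c > 0, independent of w, N₁ and N₂, such that for every continuously differentiable w : Ω̄ → ℝ with Ω = (0,1)², ‖w − 𝒞_h w‖_{L¹(Ω)} ≤ c h ∫_Ω |∇w(z)| dz, where h = max(h₁, h₂). -/
open MeasureTheory Set
open scoped ENNReal NNReal

noncomputable section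

/-!
On the cell containing `z`, `𝒞_h w (z)` is a convex combination of the four nodal values, and
each nodal value is the average of `w` over a set `Q_Ω(k,l)` of measure at least `h₁h₂/4`
contained in `z + 3Q` (`Qset (3 * h₁) (3 * h₂)`). Hence
`|w z - 𝒞_h w (z)| ≤ 4 (h₁h₂)⁻¹ ∫_{3Q} |w (z + v) - w z| dv`, and the fundamental theorem of
calculus on the segment `[z, z + v] ⊆ Ω` bounds the integrand by `3h ∫₀¹ |∇w| (z + t v) dt`.
Integrating over `z ∈ Ω`, Tonelli and translation invariance turn the triple integral into
`|3Q| ∫_Ω |∇w| = 9 h₁h₂ ∫_Ω |∇w|`, whence the constant `4 · 3 · 9 = 108`.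
-/

theorem enorm_sub_le_lintegral_fderiv_segment {E F : Type*} [NormedAddCommGroup E]
    [NormedSpace ℝ E] [NormedAddCommGroup F] [NormedSpace ℝ F] [CompleteSpace F] {U : Set E}
    (hU : IsOpen U) (hUc : Convex ℝ U) {w : E → F} (hw : ContDiffOn ℝ 1 w U) {z y : E}
    (hz : z ∈ U) (hy : y ∈ U) :
    ‖w y - w z‖ₑ ≤ ∫⁻ t in Ioc (0 : ℝ) 1, ‖fderiv ℝ w (z + t • (y - z)) (y - z)‖ₑ := by
  have hseg : ∀ t ∈ Icc (0 : ℝ) 1, z + t • (y - z) ∈ U := fun t ht => hUc.add_smul_sub_mem hz hy ht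
  have hderiv : ∀ t ∈ uIcc (0 : ℝ) 1, HasDerivAt (fun t : ℝ => w (z + t • (y - z)))
      (fderiv ℝ w (z + t • (y - z)) (y - z)) t := by
    intro t ht
    rw [uIcc_of_le zero_le_one] at ht
    have hw' := (hw.differentiableOn one_ne_zero _ (hseg t ht)).differentiableAt
      (hU.mem_nhds (hseg t ht))
    have hpath : HasDerivAt (fun t : ℝ => z + t • (y - z)) (y - z) t := by
      simpa using ((hasDerivAt_id t).smul_const (y - z)).const_add z
    exact hw'.hasFDerivAt.comp_hasDerivAt t hpath
  have hcont : ContinuousOn (fun t : ℝ => fderiv ℝ w (z + t • (y - z)) (y - z)) (Icc 0 1) :=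
    ((hw.continuousOn_fderiv_of_isOpen hU le_rfl).comp (by fun_prop) hseg).clm_apply
      continuousOn_const
  have hftc := intervalIntegral.integral_eq_sub_of_hasDerivAt hderiv
    (hcont.intervalIntegrable_of_Icc zero_le_one)
  rw [one_smul, zero_smul, add_zero, add_sub_cancel, intervalIntegral.integral_of_le zero_le_one]
    at hftc
  exact hftc ▸ enorm_integral_le_lintegral_enorm _

theorem enorm_sub_setAverage_le {α E : Type*} [MeasurableSpace α] [NormedAddCommGroup E]
    [NormedSpace ℝ E] [CompleteSpace E] {μ : Measure α} {s : Set α} (h0 : μ s ≠ 0)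
    (hs : μ s ≠ ∞) {f : α → E} (hf : IntegrableOn f s μ) (c : E) :
    ‖c - ⨍ x in s, f x ∂μ‖ₑ ≤ ⨍⁻ x in s, ‖c - f x‖ₑ ∂μ := by
  have hsub : ⨍ x in s, (c - f x) ∂μ = c - ⨍ x in s, f x ∂μ := by
    rw [setAverage_eq, integral_sub (integrableOn_const (C := c) hs) hf, smul_sub, ← setAverage_eq,
      ← setAverage_eq, setAverage_const h0 hs]
  rw [← hsub, setAverage_eq', setLAverage_eq']
  exact enorm_integral_le_lintegral_enorm _

theorem setLIntegral_comp_sub_le {G : Type*} [MeasurableSpace G] [AddGroup G] [MeasurableAdd G]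
    (μ : Measure G) [μ.IsAddRightInvariant] {Q R : Set G} {z : G} (hQR : ∀ y ∈ Q, y - z ∈ R)
    (F : G → ℝ≥0∞) : ∫⁻ y in Q, F (y - z) ∂μ ≤ ∫⁻ v in R, F v ∂μ :=
  (lintegral_mono_set hQR).trans_eq
    ((measurePreserving_sub_right μ z).setLIntegral_comp_preimage_emb
      (measurableEmbedding_subRight z) F R)

def segmentMass {E : Type*} [AddCommGroup E] [Module ℝ E] [MeasurableSpace E] (μ : Measure E)
    (R : Set E) (g : E → ℝ≥0∞) (z : E) : ℝ≥0∞ :=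
  ∫⁻ v in R, (∫⁻ t in Ioc (0 : ℝ) 1, g (z + t • v)) ∂μ

theorem lintegral_segmentMass {E : Type*} [NormedAddCommGroup E] [NormedSpace ℝ E]
    [MeasurableSpace E] [BorelSpace E] [SecondCountableTopology E] (μ : Measure E) [SFinite μ]
    [μ.IsAddRightInvariant] (R : Set E) {g : E → ℝ≥0∞} (hg : Measurable g) :
    ∫⁻ z, segmentMass μ R g z ∂μ = μ R * ∫⁻ z, g z ∂μ := by
  have hmeas : Measurable fun p : E × E × ℝ => g (p.1 + p.2.2 • p.2.1) := by fun_prop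
  calc ∫⁻ z, segmentMass μ R g z ∂μ
      = ∫⁻ v in R, ∫⁻ z, (∫⁻ t in Ioc (0 : ℝ) 1, g (z + t • v)) ∂μ ∂μ :=
        lintegral_lintegral_swap (Measurable.lintegral_prod_right'
          (hmeas.comp (by fun_prop : Measurable fun q : (E × E) × ℝ => (q.1.1, q.1.2, q.2)))
          ).aemeasurable
    _ = ∫⁻ v in R, (∫⁻ t in Ioc (0 : ℝ) 1, ∫⁻ z, g (z + t • v) ∂μ) ∂μ := by
        refine lintegral_congr fun v => lintegral_lintegral_swap ?_
        exact (hmeas.comp (by fun_prop : Measurable fun q : E × ℝ => (q.1, v, q.2))).aemeasurable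
    _ = μ R * ∫⁻ z, g z ∂μ := by
        simp_rw [lintegral_add_right_eq_self]
        rw [setLIntegral_const, setLIntegral_const, Real.volume_Ioc, sub_zero, ENNReal.ofReal_one,
          mul_one, mul_comm]

theorem exists_eq_add_mul_sub_of_mem_Icc {a b x : ℝ} (hab : a < b) (hx : x ∈ Icc a b) :
    ∃ s ∈ Icc (0 : ℝ) 1, x = a + s * (b - a) := by
  refine ⟨(x - a) / (b - a), ⟨div_nonneg (by linarith [hx.1]) (by linarith), ?_⟩, ?_⟩
  · rw [div_le_one (by linarith)]
    linarith [hx.2]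
  · rw [div_mul_cancel₀ _ (sub_ne_zero.2 hab.ne')]
    ring

theorem IsBilinearOn.abs_sub_le {f : ℝ × ℝ → ℝ} {x₀ x₁ y₀ y₁ : ℝ} (hx : x₀ < x₁) (hy : y₀ < y₁)
    (hf : IsBilinearOn f (Icc x₀ x₁ ×ˢ Icc y₀ y₁)) {c M : ℝ}
    (h₀₀ : |c - f (x₀, y₀)| ≤ M) (h₁₀ : |c - f (x₁, y₀)| ≤ M)
    (h₀₁ : |c - f (x₀, y₁)| ≤ M) (h₁₁ : |c - f (x₁, y₁)| ≤ M)
    {z : ℝ × ℝ} (hz : z ∈ Icc x₀ x₁ ×ˢ Icc y₀ y₁) : |c - f z| ≤ M := by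
  obtain ⟨a, b, d, e, hf⟩ := hf
  obtain ⟨s, ⟨hs₀, hs₁⟩, hzs⟩ := exists_eq_add_mul_sub_of_mem_Icc hx hz.1
  obtain ⟨t, ⟨ht₀, ht₁⟩, hzt⟩ := exists_eq_add_mul_sub_of_mem_Icc hy hz.2
  have hcomb : c - f z = (1 - s) * (1 - t) * (c - f (x₀, y₀)) + s * (1 - t) * (c - f (x₁, y₀)) +
      (1 - s) * t * (c - f (x₀, y₁)) + s * t * (c - f (x₁, y₁)) := by
    rw [hf z hz, hf (x₀, y₀) ⟨⟨le_rfl, hx.le⟩, le_rfl, hy.le⟩,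
      hf (x₁, y₀) ⟨⟨hx.le, le_rfl⟩, le_rfl, hy.le⟩, hf (x₀, y₁) ⟨⟨le_rfl, hx.le⟩, hy.le, le_rfl⟩,
      hf (x₁, y₁) ⟨⟨hx.le, le_rfl⟩, hy.le, le_rfl⟩, hzs, hzt]
    ring
  have w₀₀ : 0 ≤ (1 - s) * (1 - t) := mul_nonneg (by linarith) (by linarith)
  have w₁₀ : 0 ≤ s * (1 - t) := mul_nonneg hs₀ (by linarith)
  have w₀₁ : 0 ≤ (1 - s) * t := mul_nonneg (by linarith) ht₀
  have w₁₁ : 0 ≤ s * t := mul_nonneg hs₀ ht₀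
  rw [abs_le] at h₀₀ h₁₀ h₀₁ h₁₁ ⊢
  rw [hcomb]
  constructor <;>
  linarith [mul_le_mul_of_nonneg_left h₀₀.1 w₀₀, mul_le_mul_of_nonneg_left h₀₀.2 w₀₀,
    mul_le_mul_of_nonneg_left h₁₀.1 w₁₀, mul_le_mul_of_nonneg_left h₁₀.2 w₁₀,
    mul_le_mul_of_nonneg_left h₀₁.1 w₀₁, mul_le_mul_of_nonneg_left h₀₁.2 w₀₁,
    mul_le_mul_of_nonneg_left h₁₁.1 w₁₁, mul_le_mul_of_nonneg_left h₁₁.2 w₁₁]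

theorem isOpen_OmgO : IsOpen OmgO := isOpen_Ioo.prod isOpen_Ioo

theorem convex_OmgO : Convex ℝ OmgO := (convex_Ioo 0 1).prod (convex_Ioo 0 1)

theorem OmgO_subset_sqC : OmgO ⊆ sqC := prod_mono Ioo_subset_Icc_self Ioo_subset_Icc_self

theorem isCompact_sqC : IsCompact sqC := isCompact_Icc.prod isCompact_Icc

theorem volume_Qset (a b : ℝ) : volume (Qset a b) = ENNReal.ofReal a * ENNReal.ofReal b := by
  rw [Qset, Measure.volume_eq_prod, Measure.prod_prod, Real.volume_Icc, Real.volume_Icc]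
  ring_nf

theorem sqrt_le_of_mem_Qset {a b : ℝ} {v : ℝ × ℝ} (hv : v ∈ Qset a b) :
    √(v.1 ^ 2 + v.2 ^ 2) ≤ (a + b) / 2 := by
  obtain ⟨⟨a₁, a₂⟩, b₁, b₂⟩ := hv
  rw [Real.sqrt_le_left (by linarith)]
  nlinarith

theorem abs_fderiv_apply_le_gradNorm (w : ℝ × ℝ → ℝ) (p u : ℝ × ℝ) :
    |fderiv ℝ w p u| ≤ √(u.1 ^ 2 + u.2 ^ 2) * gradNorm w p := by
  have hu : fderiv ℝ w p u = u.1 * fderiv ℝ w p (1, 0) + u.2 * fderiv ℝ w p (0, 1) := by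
    conv_lhs => rw [show u = u.1 • ((1, 0) : ℝ × ℝ) + u.2 • (0, 1) by ext <;> simp]
    rw [map_add, map_smul, map_smul, smul_eq_mul, smul_eq_mul]
  rw [hu, gradNorm, ← Real.sqrt_mul (by positivity), ← Real.sqrt_sq_eq_abs]
  exact Real.sqrt_le_sqrt (by
    nlinarith [sq_nonneg (u.1 * fderiv ℝ w p (0, 1) - u.2 * fderiv ℝ w p (1, 0))])

theorem measurable_gradNorm (w : ℝ × ℝ → ℝ) : Measurable (gradNorm w) := by
  unfold gradNorm
  fun_prop

theorem integrableOn_gradNorm {w : ℝ × ℝ → ℝ} (hw : ContDiffOn ℝ 1 w sqC) :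
    IntegrableOn (gradNorm w) OmgO := by
  have hD := hw.continuousOn_fderivWithin
    ((uniqueDiffOn_Icc zero_lt_one).prod (uniqueDiffOn_Icc zero_lt_one)) le_rfl
  have hcont : ContinuousOn (fun p => √(fderivWithin ℝ w sqC p (1, 0) ^ 2 +
      fderivWithin ℝ w sqC p (0, 1) ^ 2)) sqC := by fun_prop
  refine ((hcont.integrableOn_compact isCompact_sqC).mono_set OmgO_subset_sqC).congr_fun
    (fun p hp => ?_) isOpen_OmgO.measurableSet
  dsimp only
  rw [gradNorm, fderivWithin_of_mem_nhds (mem_nhds_iff.2 ⟨OmgO, OmgO_subset_sqC, isOpen_OmgO, hp⟩)]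

def gradNormOmg (w : ℝ × ℝ → ℝ) : ℝ × ℝ → ℝ≥0∞ :=
  OmgO.indicator fun p => ENNReal.ofReal (gradNorm w p)

theorem measurable_gradNormOmg (w : ℝ × ℝ → ℝ) : Measurable (gradNormOmg w) :=
  (measurable_gradNorm w).ennreal_ofReal.indicator isOpen_OmgO.measurableSet

theorem lintegral_gradNormOmg {w : ℝ × ℝ → ℝ} (hw : ContDiffOn ℝ 1 w sqC) :
    ∫⁻ p, gradNormOmg w p = ENNReal.ofReal (∫ p in OmgO, gradNorm w p) := by
  rw [gradNormOmg, lintegral_indicator isOpen_OmgO.measurableSet,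
    ofReal_integral_eq_lintegral_ofReal (integrableOn_gradNorm hw)
      (ae_of_all _ fun p => Real.sqrt_nonneg _)]

theorem enorm_sub_le_lintegral_gradNormOmg {w : ℝ × ℝ → ℝ} (hw : ContDiffOn ℝ 1 w sqC)
    {z y : ℝ × ℝ} (hz : z ∈ OmgO) (hy : y ∈ OmgO) :
    ‖w y - w z‖ₑ ≤ ENNReal.ofReal √((y - z).1 ^ 2 + (y - z).2 ^ 2) *
      ∫⁻ t in Ioc (0 : ℝ) 1, gradNormOmg w (z + t • (y - z)) := by
  refine (enorm_sub_le_lintegral_fderiv_segment isOpen_OmgO convex_OmgO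
    (hw.mono OmgO_subset_sqC) hz hy).trans ?_
  rw [← lintegral_const_mul' _ _ ENNReal.ofReal_ne_top]
  refine setLIntegral_mono' measurableSet_Ioc fun t ht => ?_
  rw [gradNormOmg, indicator_of_mem (convex_OmgO.add_smul_sub_mem hz hy (Ioc_subset_Icc_self ht)),
    Real.enorm_eq_ofReal_abs, ← ENNReal.ofReal_mul (Real.sqrt_nonneg _)]
  exact ENNReal.ofReal_le_ofReal (abs_fderiv_apply_le_gradNorm w _ _)

theorem exists_nat_lt_mul_le_le {N : ℕ} (hN : 0 < N) {h : ℝ} (e : h = 1 / N) {x : ℝ}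
    (hx : x ∈ Ioo (0 : ℝ) 1) : ∃ k < N, (k : ℝ) * h ≤ x ∧ x ≤ ((k : ℝ) + 1) * h := by
  have hNR : (0 : ℝ) < N := Nat.cast_pos.2 hN
  have hfloor := Nat.floor_le (mul_nonneg hx.1.le hNR.le)
  have hlt := Nat.lt_floor_add_one (x * N)
  refine ⟨⌊x * N⌋₊, ?_, ?_, ?_⟩
  · exact_mod_cast hfloor.trans_lt (mul_lt_of_lt_one_left hNR hx.2)
  · rw [e, mul_one_div, div_le_iff₀ hNR]
    exact hfloor
  · rw [e, mul_one_div, le_div_iff₀ hNR]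
    exact hlt.le

theorem ofReal_le_volume_Icc_inter_Ioo {m r : ℝ} (hm : m ∈ Icc (0 : ℝ) 1) (hr : r ≤ 1) :
    ENNReal.ofReal r ≤ volume (Icc (m - r) (m + r) ∩ Ioo 0 1) := by
  calc ENNReal.ofReal r = volume (Ioo (max (m - r) 0) (max (m - r) 0 + r)) := by
        rw [Real.volume_Ioo, add_sub_cancel_left]
    _ ≤ _ := measure_mono fun x ⟨h₁, h₂⟩ => by
        refine ⟨⟨?_, ?_⟩, ?_, ?_⟩ <;> rcases max_cases (m - r) 0 with h | h <;>
          linarith [hm.1, hm.2]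

theorem ofReal_half_le_volume_Icc_inter_Ioo {N k : ℕ} {h : ℝ} (e : h = 1 / N) (hk : k ≤ N) :
    ENNReal.ofReal (h / 2) ≤ volume (Icc (k * h - h / 2) (k * h + h / 2) ∩ Ioo 0 1) := by
  subst e
  refine ofReal_le_volume_Icc_inter_Ioo ⟨by positivity, ?_⟩ ?_
  · rw [mul_one_div]
    exact div_le_one_of_le₀ (Nat.cast_le.2 hk) (Nat.cast_nonneg N)
  · rw [one_div]
    linarith [Nat.cast_inv_le_one (α := ℝ) N]

theorem ofReal_le_volume_QOmg {N₁ N₂ : ℕ} {h₁ h₂ : ℝ} (e₁ : h₁ = 1 / N₁) (e₂ : h₂ = 1 / N₂)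
    {i j : ℕ} (hi : i ≤ N₁) (hj : j ≤ N₂) :
    ENNReal.ofReal (h₁ / 2) * ENNReal.ofReal (h₂ / 2) ≤ volume (QOmg h₁ h₂ i j) := by
  rw [QOmg, OmgO, prod_inter_prod, Measure.volume_eq_prod, Measure.prod_prod]
  simp only [Int.cast_natCast]
  exact mul_le_mul' (ofReal_half_le_volume_Icc_inter_Ioo e₁ hi)
    (ofReal_half_le_volume_Icc_inter_Ioo e₂ hj)

theorem sub_mem_Qset_of_mem_QOmg {h₁ h₂ : ℝ} {i j : ℤ} {y z : ℝ × ℝ} (hy : y ∈ QOmg h₁ h₂ i j)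
    (hzi : |z.1 - i * h₁| ≤ h₁) (hzj : |z.2 - j * h₂| ≤ h₂) : y - z ∈ Qset (3 * h₁) (3 * h₂) := by
  obtain ⟨⟨⟨a₁, a₂⟩, b₁, b₂⟩, -⟩ := hy
  rw [abs_le] at hzi hzj
  refine ⟨⟨?_, ?_⟩, ?_, ?_⟩ <;> simp only [Prod.fst_sub, Prod.snd_sub] <;> linarith

theorem enorm_sub_average_QOmg_le {N₁ N₂ : ℕ} {h₁ h₂ : ℝ} (hN₁ : 0 < N₁) (hN₂ : 0 < N₂)
    (e₁ : h₁ = 1 / N₁) (e₂ : h₂ = 1 / N₂) {w : ℝ × ℝ → ℝ} (hw : ContDiffOn ℝ 1 w sqC)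
    {z : ℝ × ℝ} (hz : z ∈ OmgO) {i j : ℕ} (hi : i ≤ N₁) (hj : j ≤ N₂)
    (hzi : |z.1 - i * h₁| ≤ h₁) (hzj : |z.2 - j * h₂| ≤ h₂) :
    ‖w z - (volume (QOmg h₁ h₂ i j)).toReal⁻¹ * ∫ y in QOmg h₁ h₂ i j, w y‖ₑ ≤
      ENNReal.ofReal (12 * max h₁ h₂ / (h₁ * h₂)) *
        segmentMass volume (Qset (3 * h₁) (3 * h₂)) (gradNormOmg w) z := by
  have hh₁ : 0 < h₁ := by rw [e₁]; positivity
  have hh₂ : 0 < h₂ := by rw [e₂]; positivity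
  set Q := QOmg h₁ h₂ i j
  set h := max h₁ h₂
  have hQΩ : Q ⊆ OmgO := inter_subset_right
  have hvol : ENNReal.ofReal (h₁ / 2) * ENNReal.ofReal (h₂ / 2) ≤ volume Q :=
    ofReal_le_volume_QOmg e₁ e₂ hi hj
  have hQ0 : volume Q ≠ 0 :=
    (lt_of_lt_of_le (ENNReal.mul_pos (by simpa using hh₁) (by simpa using hh₂)) hvol).ne'
  have hQtop : volume Q ≠ ∞ :=
    measure_ne_top_of_subset (hQΩ.trans OmgO_subset_sqC) isCompact_sqC.measure_lt_top.ne
  have hQR : ∀ y ∈ Q, y - z ∈ Qset (3 * h₁) (3 * h₂) := fun y hy =>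
    sub_mem_Qset_of_mem_QOmg hy (by rwa [Int.cast_natCast]) (by rwa [Int.cast_natCast])
  have hseg : ∀ y ∈ Q, ‖w z - w y‖ₑ ≤
      ENNReal.ofReal (3 * h) * ∫⁻ t in Ioc (0 : ℝ) 1, gradNormOmg w (z + t • (y - z)) := by
    intro y hy
    rw [enorm_sub_rev]
    refine (enorm_sub_le_lintegral_gradNormOmg hw hz (hQΩ hy)).trans
      (mul_le_mul_left (ENNReal.ofReal_le_ofReal ?_) _)
    linarith [sqrt_le_of_mem_Qset (hQR y hy), le_max_left h₁ h₂, le_max_right h₁ h₂]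
  have hint : IntegrableOn w Q :=
    (hw.continuousOn.integrableOn_compact isCompact_sqC).mono_set (hQΩ.trans OmgO_subset_sqC)
  calc ‖w z - (volume Q).toReal⁻¹ * ∫ y in Q, w y‖ₑ
      = ‖w z - ⨍ y in Q, w y‖ₑ := by rw [setAverage_eq, measureReal_def, smul_eq_mul]
    _ ≤ (∫⁻ y in Q, ‖w z - w y‖ₑ) / volume Q :=
        (enorm_sub_setAverage_le hQ0 hQtop hint _).trans_eq (setLAverage_eq volume _ _)
    _ ≤ ENNReal.ofReal (3 * h) * segmentMass volume (Qset (3 * h₁) (3 * h₂)) (gradNormOmg w) z /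
          (ENNReal.ofReal (h₁ / 2) * ENNReal.ofReal (h₂ / 2)) := by
        refine ENNReal.div_le_div ?_ hvol
        calc ∫⁻ y in Q, ‖w z - w y‖ₑ
            ≤ ∫⁻ y in Q, ENNReal.ofReal (3 * h) *
                ∫⁻ t in Ioc (0 : ℝ) 1, gradNormOmg w (z + t • (y - z)) :=
              setLIntegral_mono' ((measurableSet_Icc.prod measurableSet_Icc).inter
                isOpen_OmgO.measurableSet) hseg
          _ = ENNReal.ofReal (3 * h) *
                ∫⁻ y in Q, ∫⁻ t in Ioc (0 : ℝ) 1, gradNormOmg w (z + t • (y - z)) :=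
              lintegral_const_mul' _ _ ENNReal.ofReal_ne_top
          _ ≤ _ := mul_le_mul_right (setLIntegral_comp_sub_le volume hQR _) _
    _ = ENNReal.ofReal (12 * h / (h₁ * h₂)) *
          segmentMass volume (Qset (3 * h₁) (3 * h₂)) (gradNormOmg w) z := by
        rw [← ENNReal.ofReal_mul (by positivity), ENNReal.mul_div_right_comm,
          ← ENNReal.ofReal_div_of_pos (by positivity)]
        congr 2
        field_simp
        ring

theorem enorm_sub_le_of_isCInterp {N₁ N₂ : ℕ} {h₁ h₂ : ℝ} (hN₁ : 0 < N₁) (hN₂ : 0 < N₂)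
    (e₁ : h₁ = 1 / N₁) (e₂ : h₂ = 1 / N₂) {w Ch : ℝ × ℝ → ℝ} (hw : ContDiffOn ℝ 1 w sqC)
    (hCh : IsCInterp N₁ N₂ h₁ h₂ w Ch) {z : ℝ × ℝ} (hz : z ∈ OmgO) :
    ‖w z - Ch z‖ₑ ≤ ENNReal.ofReal (12 * max h₁ h₂ / (h₁ * h₂)) *
      segmentMass volume (Qset (3 * h₁) (3 * h₂)) (gradNormOmg w) z := by
  set M := ENNReal.ofReal (12 * max h₁ h₂ / (h₁ * h₂)) *
    segmentMass volume (Qset (3 * h₁) (3 * h₂)) (gradNormOmg w) z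
  rcases eq_or_ne M ∞ with hM | hM
  · exact hM ▸ le_top
  have hh₁ : 0 < h₁ := by rw [e₁]; positivity
  have hh₂ : 0 < h₂ := by rw [e₂]; positivity
  have hnode : ∀ i j : ℕ, i ≤ N₁ → j ≤ N₂ → |z.1 - i * h₁| ≤ h₁ → |z.2 - j * h₂| ≤ h₂ →
      |w z - Ch (i * h₁, j * h₂)| ≤ M.toReal := by
    intro i j hi hj hzi hzj
    rw [hCh.2.2 i j hi hj, ← ENNReal.ofReal_le_iff_le_toReal hM, ← Real.enorm_eq_ofReal_abs]
    exact enorm_sub_average_QOmg_le hN₁ hN₂ e₁ e₂ hw hz hi hj hzi hzj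
  obtain ⟨k, hk, hk₀, hk₁⟩ := exists_nat_lt_mul_le_le hN₁ e₁ hz.1
  obtain ⟨l, hl, hl₀, hl₁⟩ := exists_nat_lt_mul_le_le hN₂ e₂ hz.2
  have hcell := hCh.2.1 k l hk hl
  simp only [cell, Int.cast_natCast] at hcell
  have hzk : |z.1 - k * h₁| ≤ h₁ := abs_le.2 ⟨by linarith, by linarith⟩
  have hzk' : |z.1 - ↑(k + 1) * h₁| ≤ h₁ :=
    abs_le.2 ⟨by push_cast; linarith, by push_cast; linarith⟩
  have hzl : |z.2 - l * h₂| ≤ h₂ := abs_le.2 ⟨by linarith, by linarith⟩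
  have hzl' : |z.2 - ↑(l + 1) * h₂| ≤ h₂ :=
    abs_le.2 ⟨by push_cast; linarith, by push_cast; linarith⟩
  rw [Real.enorm_eq_ofReal_abs, ENNReal.ofReal_le_iff_le_toReal hM]
  refine hcell.abs_sub_le (by nlinarith) (by nlinarith) (hnode k l hk.le hl.le hzk hzl)
    ?_ ?_ ?_ ⟨⟨hk₀, hk₁⟩, hl₀, hl₁⟩
  · simpa using hnode (k + 1) l hk hl.le hzk' hzl
  · simpa using hnode k (l + 1) hk.le hl hzk hzl'
  · simpa using hnode (k + 1) (l + 1) hk hl hzk' hzl'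

theorem lintegral_enorm_sub_le_of_isCInterp {N₁ N₂ : ℕ} {h₁ h₂ : ℝ} (hN₁ : 0 < N₁)
    (hN₂ : 0 < N₂) (e₁ : h₁ = 1 / N₁) (e₂ : h₂ = 1 / N₂) {w Ch : ℝ × ℝ → ℝ}
    (hw : ContDiffOn ℝ 1 w sqC) (hCh : IsCInterp N₁ N₂ h₁ h₂ w Ch) :
    ∫⁻ z in OmgO, ‖w z - Ch z‖ₑ ≤
      ENNReal.ofReal (108 * max h₁ h₂ * ∫ z in OmgO, gradNorm w z) := by
  have hh₁ : 0 < h₁ := by rw [e₁]; positivity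
  have hh₂ : 0 < h₂ := by rw [e₂]; positivity
  set h := max h₁ h₂
  set R := Qset (3 * h₁) (3 * h₂)
  have hI : 0 ≤ ∫ z in OmgO, gradNorm w z := integral_nonneg fun _ => Real.sqrt_nonneg _
  calc ∫⁻ z in OmgO, ‖w z - Ch z‖ₑ
      ≤ ∫⁻ z in OmgO,
          ENNReal.ofReal (12 * h / (h₁ * h₂)) * segmentMass volume R (gradNormOmg w) z :=
        setLIntegral_mono' isOpen_OmgO.measurableSet fun z hz =>
          enorm_sub_le_of_isCInterp hN₁ hN₂ e₁ e₂ hw hCh hz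
    _ ≤ ENNReal.ofReal (12 * h / (h₁ * h₂)) * ∫⁻ z, segmentMass volume R (gradNormOmg w) z := by
        rw [lintegral_const_mul' _ _ ENNReal.ofReal_ne_top]
        exact mul_le_mul_right (setLIntegral_le_lintegral _ _) _
    _ = ENNReal.ofReal (108 * h * ∫ z in OmgO, gradNorm w z) := by
        rw [lintegral_segmentMass volume R (measurable_gradNormOmg w), lintegral_gradNormOmg hw,
          volume_Qset, ← ENNReal.ofReal_mul (by positivity), ← ENNReal.ofReal_mul (by positivity),
          ← ENNReal.ofReal_mul (by positivity)]
        congr 1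
        field_simp
        ring

/-- first-order L¹ approximation estimate for `𝒞_h`. -/
theorem stmt14 :
    ∃ c : ℝ, 0 < c ∧
      ∀ (N₁ N₂ : ℕ), 0 < N₁ → 0 < N₂ → ∀ h₁ h₂ : ℝ, h₁ = 1 / N₁ → h₂ = 1 / N₂ →
        ∀ w : ℝ × ℝ → ℝ, ContDiffOn ℝ 1 w sqC →
          ∀ Ch : ℝ × ℝ → ℝ, IsCInterp N₁ N₂ h₁ h₂ w Ch →
            (∫ z in OmgO, |w z - Ch z|) ≤ c * max h₁ h₂ * ∫ z in OmgO, gradNorm w z := by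
  refine ⟨108, by norm_num, fun N₁ N₂ hN₁ hN₂ h₁ h₂ e₁ e₂ w hw Ch hCh => ?_⟩
  have hmeas : AEStronglyMeasurable (fun z => w z - Ch z) (volume.restrict OmgO) :=
    ((hw.continuousOn.sub hCh.1).mono OmgO_subset_sqC).aestronglyMeasurable
      isOpen_OmgO.measurableSet
  have hnonneg : 0 ≤ 108 * max h₁ h₂ * ∫ z in OmgO, gradNorm w z := by
    have hh₁ : 0 < h₁ := by rw [e₁]; positivity
    have hI : 0 ≤ ∫ z in OmgO, gradNorm w z := integral_nonneg fun _ => Real.sqrt_nonneg _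
    positivity
  calc ∫ z in OmgO, |w z - Ch z|
      = (∫⁻ z in OmgO, ‖w z - Ch z‖ₑ).toReal := integral_norm_eq_lintegral_enorm hmeas
    _ ≤ (ENNReal.ofReal (108 * max h₁ h₂ * ∫ z in OmgO, gradNorm w z)).toReal :=
        ENNReal.toReal_mono ENNReal.ofReal_ne_top
          (lintegral_enorm_sub_le_of_isCInterp hN₁ hN₂ e₁ e₂ hw hCh)
    _ = 108 * max h₁ h₂ * ∫ z in OmgO, gradNorm w z := ENNReal.toReal_ofReal hnonneg
end
end
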